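/- arXiv:1406.5684 — 10 statements merged into one kernel-verified Lean document; each statement's English description precedes it below -/
import Mathlib

section
/- If a positive integer n can be written as n = abc with 1 < a < b < c, then σ₂(n) - n² ≥ 3·n^{4/3}. -/
theorem stmt2 (a b c n : ℕ) (ha : 1 < a) (hab : a < b) (hbc : b < c)
    (hn : n = a * b * c) :
    (ArithmeticFunction.sigma 2 n : ℝ) - (n : ℝ) ^ 2 ≥ 3 * (n : ℝ) ^ ((4 : ℝ) / 3) := by
  have ha0 : 0 < a := by omega
  have hb0 : 0 < b := by omega
  have hc0 : 0 < c := by omega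
  have hn0 : 0 < n := by subst hn; positivity
  have h1 : a * b < a * c := by nlinarith
  have h2 : a * c < b * c := by nlinarith
  have h3 : b * c < n := by subst hn; nlinarith
  have hsub : ({a*b, a*c, b*c, n} : Finset ℕ) ⊆ n.divisors := by
    intro d hd
    simp only [Finset.mem_insert, Finset.mem_singleton] at hd
    rcases hd with rfl | rfl | rfl | rfl <;>
      simp [Nat.mem_divisors, hn0.ne'] <;> subst hn
    · exact ⟨c, by ring⟩
    · exact ⟨b, by ring⟩
    · exact ⟨a, by ring⟩
  have hsum : ∑ d ∈ ({a*b, a*c, b*c, n} : Finset ℕ), d^2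
      = (a*b)^2 + (a*c)^2 + (b*c)^2 + n^2 := by
    have m1 : a*b ∉ ({a*c, b*c, n} : Finset ℕ) := by
      simp only [Finset.mem_insert, Finset.mem_singleton]
      push_neg
      exact ⟨h1.ne, (h1.trans h2).ne, (h1.trans (h2.trans h3)).ne⟩
    have m2 : a*c ∉ ({b*c, n} : Finset ℕ) := by
      simp only [Finset.mem_insert, Finset.mem_singleton]
      push_neg
      exact ⟨h2.ne, (h2.trans h3).ne⟩
    have m3 : b*c ∉ ({n} : Finset ℕ) := by
      simp only [Finset.mem_singleton]
      exact h3.ne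
    rw [Finset.sum_insert m1, Finset.sum_insert m2, Finset.sum_insert m3,
      Finset.sum_singleton]
    ring
  have hS : (a*b)^2 + (a*c)^2 + (b*c)^2 + n^2 ≤ ArithmeticFunction.sigma 2 n := by
    rw [ArithmeticFunction.sigma_apply, ← hsum]
    exact Finset.sum_le_sum_of_subset hsub
  have hSR : ((a*b:ℕ):ℝ)^2 + ((a*c:ℕ):ℝ)^2 + ((b*c:ℕ):ℝ)^2 + (n:ℝ)^2
      ≤ (ArithmeticFunction.sigma 2 n : ℝ) := by
    exact_mod_cast hS
  have key : 3 * (n:ℝ)^((4:ℝ)/3) ≤ ((a*b:ℕ):ℝ)^2 + ((a*c:ℕ):ℝ)^2 + ((b*c:ℕ):ℝ)^2 := by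
    set x : ℝ := ((a*b:ℕ):ℝ) with hx
    set y : ℝ := ((a*c:ℕ):ℝ) with hy
    set z : ℝ := ((b*c:ℕ):ℝ) with hz
    have hx0 : 0 ≤ x := by positivity
    have hy0 : 0 ≤ y := by positivity
    have hz0 : 0 ≤ z := by positivity
    have hw : (1:ℝ)/3 + 1/3 + 1/3 = 1 := by norm_num
    have := Real.geom_mean_le_arith_mean3_weighted (by norm_num) (by norm_num) (by norm_num)
      (by positivity : (0:ℝ) ≤ x^2) (by positivity : (0:ℝ) ≤ y^2)
      (by positivity : (0:ℝ) ≤ z^2) hw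
    have hmul : (x^2)^((1:ℝ)/3) * (y^2)^((1:ℝ)/3) * (z^2)^((1:ℝ)/3)
        = (n:ℝ)^((4:ℝ)/3) := by
      rw [← Real.mul_rpow (by positivity) (by positivity),
        ← Real.mul_rpow (by positivity) (by positivity)]
      have hxyz : x^2 * y^2 * z^2 = (n:ℝ)^(4:ℕ) := by
        rw [hx, hy, hz]
        push_cast [hn]
        ring
      rw [hxyz, ← Real.rpow_natCast (n:ℝ) 4, ← Real.rpow_mul (by positivity)]
      norm_num
    rw [hmul] at this
    linarith
  linarith
end

section
/- If n has at least three distinct prime factors, then σ₂(n) - n² > 3·n^{4/3}; in particular, for any integers A, B with n > (|A| + |B|)³, such n cannot satisfy σ₂(n) - n² = A·n + B. -/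
theorem sig2_dvd_le (m n : ℕ) (hn : 0 < n) (hm : m ∣ n) :
    (n/m)^2 * ArithmeticFunction.sigma 2 m ≤ ArithmeticFunction.sigma 2 n := by
  have hm0 : 0 < m := Nat.pos_of_dvd_of_pos hm hn
  have h2 : 0 < n / m := Nat.div_pos (Nat.le_of_dvd hn hm) hm0
  rw [ArithmeticFunction.sigma_apply, ArithmeticFunction.sigma_apply, Finset.mul_sum]
  have hinj : ∀ a ∈ m.divisors, ∀ b ∈ m.divisors,
      a * (n/m) = b * (n/m) → a = b := fun a _ b _ h =>
    Nat.eq_of_mul_eq_mul_right h2 h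
  calc ∑ d ∈ m.divisors, (n/m)^2 * d^2
      = ∑ d ∈ m.divisors, (d * (n/m))^2 := by
        apply Finset.sum_congr rfl; intros; ring
    _ = ∑ x ∈ m.divisors.image (fun d => d * (n/m)), x^2 :=
        (Finset.sum_image (f := fun x => x^2) hinj).symm
    _ ≤ ∑ d ∈ n.divisors, d^2 := by
        apply Finset.sum_le_sum_of_subset
        intro x hx
        simp only [Finset.mem_image, Nat.mem_divisors] at hx ⊢
        obtain ⟨d, ⟨hd, _⟩, rfl⟩ := hx
        exact ⟨(Nat.mul_dvd_mul hd (dvd_refl _)).trans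
          (by rw [Nat.mul_div_cancel' hm]), hn.ne'⟩

theorem amgm3 (p q r : ℝ) (hp : 0 ≤ p) (hq : 0 ≤ q) (hr : 0 ≤ r) :
    3 * (p*q*r) ^ ((4:ℝ)/3) ≤ p^2*q^2 + p^2*r^2 + q^2*r^2 := by
  have h := Real.geom_mean_le_arith_mean3_weighted (by norm_num : (0:ℝ) ≤ 1/3)
    (by norm_num : (0:ℝ) ≤ 1/3) (by norm_num : (0:ℝ) ≤ 1/3)
    (by positivity : (0:ℝ) ≤ p^2*q^2) (by positivity : (0:ℝ) ≤ p^2*r^2)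
    (by positivity : (0:ℝ) ≤ q^2*r^2) (by norm_num)
  have key : (p^2*q^2) ^ ((1:ℝ)/3) * (p^2*r^2) ^ ((1:ℝ)/3) * (q^2*r^2) ^ ((1:ℝ)/3)
      = (p*q*r) ^ ((4:ℝ)/3) := by
    rw [← Real.mul_rpow (by positivity) (by positivity),
        ← Real.mul_rpow (by positivity) (by positivity)]
    rw [show p^2*q^2 * (p^2*r^2) * (q^2*r^2) = ((p*q*r)^2)^2 by ring]
    rw [← Real.rpow_natCast ((p*q*r)^2) 2, ← Real.rpow_mul (by positivity),
        ← Real.rpow_natCast (p*q*r) 2, ← Real.rpow_mul (by positivity)]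
    norm_num
  rw [key] at h
  linarith

theorem sig2_prime (p : ℕ) (hp : p.Prime) : ArithmeticFunction.sigma 2 p = 1 + p^2 := by
  rw [ArithmeticFunction.sigma_apply, hp.divisors, Finset.sum_pair hp.one_lt.ne]
  simp

theorem stmt4 (n : ℕ) (hn : 0 < n) (hω : 3 ≤ n.primeFactors.card) :
    ((ArithmeticFunction.sigma 2 n : ℝ) - (n : ℝ) ^ 2 > 3 * (n : ℝ) ^ ((4 : ℝ) / 3)) ∧
    ∀ A B : ℤ, (n : ℤ) > (|A| + |B|) ^ 3 →
      (ArithmeticFunction.sigma 2 n : ℤ) - (n : ℤ) ^ 2 ≠ A * n + B := by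
  -- extract three distinct primes
  obtain ⟨s, hs, hcard⟩ := Finset.exists_subset_card_eq hω
  obtain ⟨p, q, r, hpq, hpr, hqr, rfl⟩ := Finset.card_eq_three.mp hcard
  have hp := hs (by simp : p ∈ ({p,q,r}:Finset ℕ))
  have hq := hs (by simp : q ∈ ({p,q,r}:Finset ℕ))
  have hr := hs (by simp : r ∈ ({p,q,r}:Finset ℕ))
  simp only [Nat.mem_primeFactors] at hp hq hr
  obtain ⟨hpP, hpd, -⟩ := hp
  obtain ⟨hqP, hqd, -⟩ := hq
  obtain ⟨hrP, hrd, -⟩ := hr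
  set m := p * q * r with hmdef
  have hmn : m ∣ n := by
    apply Nat.Coprime.mul_dvd_of_dvd_of_dvd _ _ hrd
    · exact Nat.Coprime.mul ((Nat.coprime_primes hpP hrP).mpr hpr)
        ((Nat.coprime_primes hqP hrP).mpr hqr)
    · exact Nat.Coprime.mul_dvd_of_dvd_of_dvd
        ((Nat.coprime_primes hpP hqP).mpr hpq) hpd hqd
  have hm0 : 0 < m := Nat.pos_of_dvd_of_pos hmn hn
  set k := n / m with hkdef
  have hk0 : 0 < k := Nat.div_pos (Nat.le_of_dvd hn hmn) hm0
  have hkm : k * m = n := Nat.div_mul_cancel hmn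
  -- sigma 2 m
  have hsm : ArithmeticFunction.sigma 2 m
      = (1 + p^2) * (1 + q^2) * (1 + r^2) := by
    have h1 : ArithmeticFunction.sigma 2 (p * q)
        = (1 + p^2) * (1 + q^2) := by
      rw [ArithmeticFunction.isMultiplicative_sigma.map_mul_of_coprime
        ((Nat.coprime_primes hpP hqP).mpr hpq), sig2_prime p hpP, sig2_prime q hqP]
    rw [hmdef, ArithmeticFunction.isMultiplicative_sigma.map_mul_of_coprime
      (Nat.Coprime.mul ((Nat.coprime_primes hpP hrP).mpr hpr)
        ((Nat.coprime_primes hqP hrP).mpr hqr)), h1, sig2_prime r hrP]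
  -- key nat inequality
  have hE : n^2 + k^2 * (p^2*q^2 + p^2*r^2 + q^2*r^2 + p^2 + q^2 + r^2 + 1)
      ≤ ArithmeticFunction.sigma 2 n := by
    have := sig2_dvd_le m n hn hmn
    rw [hsm, ← hkdef] at this
    calc n^2 + k^2 * (p^2*q^2 + p^2*r^2 + q^2*r^2 + p^2 + q^2 + r^2 + 1)
        = k^2 * ((1 + p^2) * (1 + q^2) * (1 + r^2)) := by
          rw [← hkm, hmdef]; ring
      _ ≤ _ := this
  -- part 1
  have hppos : (0:ℝ) < p := by exact_mod_cast hpP.pos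
  have hqpos : (0:ℝ) < q := by exact_mod_cast hqP.pos
  have hrpos : (0:ℝ) < r := by exact_mod_cast hrP.pos
  have hkpos : (1:ℝ) ≤ k := by exact_mod_cast hk0
  have hmR : (m:ℝ) = p * q * r := by push_cast [hmdef]; ring
  have hnR : (n:ℝ) = k * m := by exact_mod_cast hkm.symm
  have hamgm := amgm3 p q r hppos.le hqpos.le hrpos.le
  have hkpow : (k:ℝ) ^ ((4:ℝ)/3) ≤ (k:ℝ)^2 := by
    calc (k:ℝ) ^ ((4:ℝ)/3) ≤ (k:ℝ) ^ (2:ℝ) :=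
          Real.rpow_le_rpow_of_exponent_le hkpos (by norm_num)
      _ = (k:ℝ)^2 := by rw [← Real.rpow_natCast (k:ℝ) 2]; norm_num
  have hmul : (n:ℝ) ^ ((4:ℝ)/3) = (k:ℝ) ^ ((4:ℝ)/3) * (m:ℝ) ^ ((4:ℝ)/3) := by
    rw [hnR, Real.mul_rpow (by positivity) (by positivity)]
  have hmpow0 : (0:ℝ) < (m:ℝ) ^ ((4:ℝ)/3) := by
    apply Real.rpow_pos_of_pos; exact_mod_cast hm0
  have part1 : (ArithmeticFunction.sigma 2 n : ℝ) - (n : ℝ) ^ 2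
      > 3 * (n : ℝ) ^ ((4 : ℝ) / 3) := by
    have hEn : (n:ℝ)^2 + (k:ℝ)^2 * ((p:ℝ)^2*(q:ℝ)^2 + (p:ℝ)^2*(r:ℝ)^2
        + (q:ℝ)^2*(r:ℝ)^2 + (p:ℝ)^2 + (q:ℝ)^2 + (r:ℝ)^2 + 1)
        ≤ (ArithmeticFunction.sigma 2 n : ℝ) := by exact_mod_cast hE
    have h1 : 3 * (m:ℝ) ^ ((4:ℝ)/3)
        ≤ (p:ℝ)^2*(q:ℝ)^2 + (p:ℝ)^2*(r:ℝ)^2 + (q:ℝ)^2*(r:ℝ)^2 := by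
      rw [hmR]; exact hamgm
    have hk2 : (1:ℝ) ≤ (k:ℝ)^2 := by
      calc (1:ℝ) = 1^2 := by norm_num
        _ ≤ (k:ℝ)^2 := by gcongr
    have h3 : 3 * (n:ℝ) ^ ((4:ℝ)/3) ≤ (k:ℝ)^2 * (3 * (m:ℝ) ^ ((4:ℝ)/3)) := by
      rw [hmul]
      have h6 := mul_le_mul_of_nonneg_right hkpow hmpow0.le
      linarith [h6]
    have h4 := mul_le_mul_of_nonneg_left h1 (by positivity : (0:ℝ) ≤ (k:ℝ)^2)
    have hrest : (1:ℝ) ≤ (p:ℝ)^2 + (q:ℝ)^2 + (r:ℝ)^2 + 1 := by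
      have := sq_nonneg (p:ℝ); have := sq_nonneg (q:ℝ); have := sq_nonneg (r:ℝ)
      linarith
    have h5 : (1:ℝ) ≤ (k:ℝ)^2 * ((p:ℝ)^2+(q:ℝ)^2+(r:ℝ)^2+1) := by
      have := mul_le_mul hk2 hrest (by norm_num) (by positivity)
      linarith
    linarith [hEn, h3, h4, h5]
  refine ⟨part1, ?_⟩
  -- part 2
  intro A B hAB heq
  have hnpos : (0:ℝ) < n := by exact_mod_cast hn
  have hs0 : (0:ℤ) ≤ |A| + |B| := by positivity
  have hsR : (((|A| + |B| : ℤ):ℝ))^(3:ℕ) < (n:ℝ) := by exact_mod_cast hAB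
  have hs0R : (0:ℝ) ≤ ((|A| + |B| : ℤ):ℝ) := by exact_mod_cast hs0
  have hslt : ((|A| + |B| : ℤ):ℝ) < (n:ℝ) ^ ((1:ℝ)/3) := by
    have h := Real.rpow_lt_rpow (by positivity) hsR (by norm_num : (0:ℝ) < 1/3)
    rwa [← Real.rpow_natCast (((|A| + |B| : ℤ):ℝ)) 3, ← Real.rpow_mul hs0R,
      (by norm_num : ((3:ℕ):ℝ) * (1/3) = 1), Real.rpow_one] at h
  have h43 : (n:ℝ) ^ ((4:ℝ)/3) = (n:ℝ) ^ ((1:ℝ)/3) * (n:ℝ) := by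
    rw [(by norm_num : (4:ℝ)/3 = 1/3 + 1), Real.rpow_add hnpos, Real.rpow_one]
  have hZ : A * (n:ℤ) + B ≤ (|A| + |B|) * (n:ℤ) := by
    have h1 : A * (n:ℤ) ≤ |A| * (n:ℤ) :=
      mul_le_mul_of_nonneg_right (le_abs_self A) (by positivity)
    have h2 : B ≤ |B| * (n:ℤ) :=
      (le_abs_self B).trans (le_mul_of_one_le_right (abs_nonneg B) (by exact_mod_cast hn))
    nlinarith [h1, h2]
  have hub : ((A * n + B : ℤ) : ℝ) < (n:ℝ) ^ ((4:ℝ)/3) := by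
    calc ((A * n + B : ℤ) : ℝ) ≤ ((|A| + |B| : ℤ):ℝ) * (n:ℝ) := by exact_mod_cast hZ
      _ < (n:ℝ) ^ ((1:ℝ)/3) * (n:ℝ) := mul_lt_mul_of_pos_right hslt hnpos
      _ = (n:ℝ) ^ ((4:ℝ)/3) := h43.symm
  have heqR : (ArithmeticFunction.sigma 2 n : ℝ) - (n : ℝ) ^ 2
      = ((A * n + B : ℤ) : ℝ) := by exact_mod_cast heq
  rw [heqR] at part1
  have hp0 : (0:ℝ) < (n:ℝ) ^ ((4:ℝ)/3) := Real.rpow_pos_of_pos hnpos _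
  linarith
end

section
/- If a and b are positive integers satisfying a² − 5·b² = −4, then there exists a nonnegative integer k such that a = L_{2k+1} and b = F_{2k+1}. -/
def lucas : ℕ → ℕ
  | 0 => 2
  | 1 => 1
  | n + 2 => lucas (n + 1) + lucas n

lemma fl : ∀ n, 2 * lucas (n+2) = 3 * lucas n + 5 * Nat.fib n ∧
    2 * Nat.fib (n+2) = lucas n + 3 * Nat.fib n := by
  intro n
  induction n using Nat.twoStepInduction with
  | zero => decide
  | one => decide
  | more n ih1 ih2 =>
    obtain ⟨a1, a2⟩ := ih1
    obtain ⟨b1, b2⟩ := ih2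
    simp only [show n+1+2 = n+3 from rfl] at a1 a2 b1 b2 ⊢
    simp only [show n+2+2 = n+4 from rfl]
    have l4 : lucas (n+4) = lucas (n+3) + lucas (n+2) := rfl
    have f4 : Nat.fib (n+4) = Nat.fib (n+2) + Nat.fib (n+3) :=
      Nat.fib_add_two
    have f2 : Nat.fib (n+2) = Nat.fib n + Nat.fib (n+1) :=
      Nat.fib_add_two
    have f3 : Nat.fib (n+3) = Nat.fib (n+1) + Nat.fib (n+2) :=
      Nat.fib_add_two
    have l2 : lucas (n+2) = lucas (n+1) + lucas n := rfl
    have l3 : lucas (n+3) = lucas (n+2) + lucas (n+1) := rfl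
    constructor <;> omega

lemma aux : ∀ b a : ℕ, 0 < a → 0 < b → a^2 + 4 = 5*b^2 →
    ∃ k : ℕ, a = lucas (2 * k + 1) ∧ b = Nat.fib (2 * k + 1) := by
  intro b
  induction b using Nat.strong_induction_on with
  | _ b IH =>
    intro a ha hb key
    rcases Nat.lt_or_ge b 2 with hb2 | hb2
    · -- b = 1, so a = 1
      interval_cases b
      have : a = 1 := by nlinarith
      exact ⟨0, by simp [this, lucas]⟩
    · -- descent
      have hab : b < a := by nlinarith
      have h3a : 5 * b < 3 * a := by nlinarith
      have ha3b : a < 3 * b := by nlinarith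
      -- parity
      have hp1 : a^2 % 2 = a % 2 := by
        rcases Nat.even_or_odd a with h | h
        · obtain ⟨c, rfl⟩ := h; have : (c+c)^2 = 2*(2*c^2) := by ring
          omega
        · obtain ⟨c, rfl⟩ := h; have : (2*c+1)^2 = 2*(2*c^2+2*c)+1 := by ring
          omega
      have hp2 : b^2 % 2 = b % 2 := by
        rcases Nat.even_or_odd b with h | h
        · obtain ⟨c, rfl⟩ := h; have : (c+c)^2 = 2*(2*c^2) := by ring
          omega
        · obtain ⟨c, rfl⟩ := h; have : (2*c+1)^2 = 2*(2*c^2+2*c)+1 := by ring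
          omega
      have hpar : a % 2 = b % 2 := by
        set x := a^2 with hx
        set y := b^2 with hy
        omega
      obtain ⟨a', ha'⟩ : ∃ a', 2*a' + 5*b = 3*a := ⟨(3*a - 5*b)/2, by omega⟩
      obtain ⟨b', hb'⟩ : ∃ b', 2*b' + a = 3*b := ⟨(3*b - a)/2, by omega⟩
      have ha'pos : 0 < a' := by omega
      have hb'pos : 0 < b' := by omega
      have hb'lt : b' < b := by omega
      have e1 : (2*a'+5*b)^2 = (3*a)^2 := by rw [ha']
      have e2 : (2*b'+a)^2 = (3*b)^2 := by rw [hb']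
      have e3 : (2*a'+5*b)*b = 3*a*b := by rw [ha']
      have e4 : (2*b'+a)*a = 3*b*a := by rw [hb']
      have key' : a'^2 + 4 = 5*b'^2 := by nlinarith [e1, e2, e3, e4, key]
      obtain ⟨k, hk1, hk2⟩ := IH b' hb'lt a' ha'pos hb'pos key'
      refine ⟨k+1, ?_, ?_⟩
      · have := (fl (2*k+1)).1
        have h2 : 2*(k+1)+1 = (2*k+1)+2 := by ring
        rw [h2, ← hk1, ← hk2] at *
        omega
      · have := (fl (2*k+1)).2
        have h2 : 2*(k+1)+1 = (2*k+1)+2 := by ring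
        rw [h2, ← hk1, ← hk2] at *
        omega

theorem stmt10 (a b : ℕ) (ha : 0 < a) (hb : 0 < b)
    (h : (a : ℤ) ^ 2 - 5 * (b : ℤ) ^ 2 = -4) :
    ∃ k : ℕ, a = lucas (2 * k + 1) ∧ b = Nat.fib (2 * k + 1) := by
  apply aux b a ha hb
  zify
  linarith
end

section
/- If q and u are positive integers satisfying q² − 5·u² = 4, then there exists a nonnegative integer k such that q = L_{2k} and u = F_{2k}. -/
lemma lucas_fib : ∀ n, lucas n + Nat.fib n = 2 * Nat.fib (n + 1)
  | 0 => rfl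
  | 1 => rfl
  | n + 2 => by
    have h1 : lucas n + Nat.fib n = 2 * Nat.fib (n + 1) := lucas_fib n
    have h2 : lucas (n + 1) + Nat.fib (n + 1) = 2 * Nat.fib (n + 2) := lucas_fib (n + 1)
    have f1 : Nat.fib (n + 2) = Nat.fib n + Nat.fib (n + 1) := Nat.fib_add_two
    have f2 : Nat.fib (n + 3) = Nat.fib (n + 1) + Nat.fib (n + 2) := Nat.fib_add_two
    show lucas (n + 1) + lucas n + Nat.fib (n + 2) = 2 * Nat.fib (n + 3)
    omega

lemma lucas_two_step (m : ℕ) : 2 * lucas (m + 2) = 3 * lucas m + 5 * Nat.fib m := by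
  have h1 : lucas m + Nat.fib m = 2 * Nat.fib (m + 1) := lucas_fib m
  have h3 : lucas (m + 2) + Nat.fib (m + 2) = 2 * Nat.fib (m + 3) := lucas_fib (m + 2)
  have f1 : Nat.fib (m + 2) = Nat.fib m + Nat.fib (m + 1) := Nat.fib_add_two
  have f2 : Nat.fib (m + 3) = Nat.fib (m + 1) + Nat.fib (m + 2) := Nat.fib_add_two
  omega

lemma fib_two_step (m : ℕ) : 2 * Nat.fib (m + 2) = lucas m + 3 * Nat.fib m := by
  have h1 : lucas m + Nat.fib m = 2 * Nat.fib (m + 1) := lucas_fib m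
  have f1 : Nat.fib (m + 2) = Nat.fib m + Nat.fib (m + 1) := Nat.fib_add_two
  omega

lemma sq_mod_two (x : ℕ) : x ^ 2 % 2 = x % 2 := by
  rcases Nat.even_or_odd x with ⟨y, rfl⟩ | ⟨y, rfl⟩ <;> ring_nf <;> omega

theorem stmt11 (q u : ℕ) (hq : 0 < q) (hu : 0 < u)
    (h : (q : ℤ) ^ 2 - 5 * (u : ℤ) ^ 2 = 4) :
    ∃ k : ℕ, q = lucas (2 * k) ∧ u = Nat.fib (2 * k) := by
  induction u using Nat.strong_induction_on generalizing q with
  | _ u IH =>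
  have hnat : q ^ 2 = 5 * u ^ 2 + 4 := by
    have : (q : ℤ) ^ 2 = 5 * (u : ℤ) ^ 2 + 4 := by linarith
    exact_mod_cast this
  rcases eq_or_lt_of_le (show 1 ≤ u from hu) with h1 | h2
  · -- u = 1, so q = 3
    have hu1 : u = 1 := h1.symm
    subst hu1
    have hq3 : q = 3 := by nlinarith
    exact ⟨1, by simp [hq3, lucas]⟩
  · -- u ≥ 2, descend
    have hparq := sq_mod_two q
    have hparu := sq_mod_two u
    have hpar : q % 2 = u % 2 := by omega
    have hqu : u < q := by nlinarith
    have hq3u : q < 3 * u := by nlinarith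
    have h5u3q : 5 * u < 3 * q := by nlinarith
    obtain ⟨q', hq'⟩ : ∃ q', 2 * q' = 3 * q - 5 * u ∧ 3 * q = 5 * u + 2 * q' := by
      refine ⟨(3 * q - 5 * u) / 2, ?_, ?_⟩ <;> omega
    obtain ⟨u', hu'⟩ : ∃ u', 2 * u' = 3 * u - q ∧ 3 * u = q + 2 * u' := by
      refine ⟨(3 * u - q) / 2, ?_, ?_⟩ <;> omega
    have hu'lt : u' < u := by omega
    have hu'pos : 0 < u' := by omega
    have hq'pos : 0 < q' := by omega
    have hz1 : 3 * (q : ℤ) = 5 * u + 2 * q' := by exact_mod_cast hq'.2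
    have hz2 : 3 * (u : ℤ) = q + 2 * u' := by exact_mod_cast hu'.2
    have e1 : 4 * (q' : ℤ) ^ 2 = 9 * q ^ 2 - 30 * q * u + 25 * u ^ 2 := by
      have h' : 2 * (q' : ℤ) = 3 * q - 5 * u := by linarith
      linear_combination (2 * (q' : ℤ) + 3 * q - 5 * u) * h' 
    have e2 : 4 * (u' : ℤ) ^ 2 = 9 * u ^ 2 - 6 * q * u + q ^ 2 := by
      have h' : 2 * (u' : ℤ) = 3 * u - q := by linarith
      linear_combination (2 * (u' : ℤ) + 3 * u - q) * h' 
    have hsol : (q' : ℤ) ^ 2 - 5 * (u' : ℤ) ^ 2 = 4 := by linarith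
    obtain ⟨k, hk1, hk2⟩ := IH u' hu'lt q' hq'pos hu'pos hsol
    refine ⟨k + 1, ?_, ?_⟩
    · have := lucas_two_step (2 * k)
      have h2 : 2 * (k + 1) = 2 * k + 2 := by ring
      rw [h2]
      omega
    · have := fib_two_step (2 * k)
      have h2 : 2 * (k + 1) = 2 * k + 2 := by ring
      rw [h2]
      omega
end

section
/- Fix a positive integer m. If p < q are primes satisfying p² + q² + F_{2m}² = L_{2m}·p·q, then either there exists k ≥ 0 with p = F_{2k+1}, q = F_{2k+2m+1}, or there exists 0 ≤ k < m with {p, q} = {F_{2k+1}, F_{2m-2k-1}}. -/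
open Nat (fib)

lemma lE1 (n : ℕ) : lucas n + fib n = 2 * fib (n+1) := by
  induction n using Nat.twoStepInduction with
  | zero => decide
  | one => decide
  | more n ih1 ih2 =>
    have r1 : lucas (n+2) = lucas (n+1) + lucas n := rfl
    have r2 : fib (n+2) = fib n + fib (n+1) := Nat.fib_add_two
    have r3 : fib (n+2+1) = fib (n+1) + fib (n+1+1) := Nat.fib_add_two
    omega

lemma lE2 (n : ℕ) : 2 * lucas (n+1) = lucas n + 5 * fib n := by
  induction n using Nat.twoStepInduction with
  | zero => decide
  | one => decide
  | more n ih1 ih2 =>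
    have r1 : lucas (n+2) = lucas (n+1) + lucas n := rfl
    have r2 : lucas (n+2+1) = lucas (n+1+1) + lucas (n+1) := rfl
    have r3 : fib (n+2) = fib n + fib (n+1) := Nat.fib_add_two
    omega

lemma lE5 (n : ℕ) : 2 * fib (n+2) = lucas n + 3 * fib n := by
  have h1 := lE1 n
  have r2 : fib (n+2) = fib n + fib (n+1) := Nat.fib_add_two
  omega

lemma lE6 (n : ℕ) : 2 * lucas (n+2) = 3 * lucas n + 5 * fib n := by
  have h1 := lE2 n
  have r1 : lucas (n+2) = lucas (n+1) + lucas n := rfl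
  omega

lemma lC (u v : ℕ) :
    2 * (fib (u+v) : ℤ) = fib u * lucas v + lucas u * fib v ∧
    2 * (lucas (u+v) : ℤ) = lucas u * lucas v + 5 * (fib u * fib v) := by
  induction v using Nat.twoStepInduction with
  | zero =>
    constructor
    · show 2 * (fib u : ℤ) = (fib u : ℤ) * ((2:ℕ):ℤ) + (lucas u : ℤ) * ((fib 0 : ℕ):ℤ)
      norm_num [Nat.fib_zero]
      ring
    · show 2 * (lucas u : ℤ) = (lucas u : ℤ) * ((2:ℕ):ℤ) + 5 * ((fib u : ℤ) * ((fib 0 : ℕ):ℤ))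
      norm_num [Nat.fib_zero]
      ring
  | one =>
    have h1 := lE1 u
    have h2 := lE2 u
    constructor
    · show 2 * (fib (u+1) : ℤ) = (fib u : ℤ) * ((1:ℕ):ℤ) + (lucas u : ℤ) * ((fib 1 : ℕ):ℤ)
      rw [Nat.fib_one]
      push_cast
      omega
    · show 2 * (lucas (u+1) : ℤ) = (lucas u : ℤ) * ((1:ℕ):ℤ) + 5 * ((fib u : ℤ) * ((fib 1 : ℕ):ℤ))
      rw [Nat.fib_one]
      push_cast
      omega
  | more n ih1 ih2 =>
    have ef : fib (u+(n+2)) = fib (u+n) + fib (u+(n+1)) := Nat.fib_add_two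
    have el : lucas (u+(n+2)) = lucas (u+(n+1)) + lucas (u+n) := rfl
    have ef2 : fib (n+2) = fib n + fib (n+1) := Nat.fib_add_two
    have el2 : lucas (n+2) = lucas (n+1) + lucas n := rfl
    constructor
    · rw [ef, ef2, el2]
      push_cast
      linear_combination ih1.1 + ih2.1
    · rw [el, el2, ef2]
      push_cast
      linear_combination ih1.2 + ih2.2

lemma lK (n : ℕ) : (fib (n+1) : ℤ)^2 = fib (n+1) * fib n + (fib n : ℤ)^2 + (-1)^n := by
  induction n with
  | zero => simp
  | succ n ih =>
    have ef : fib (n+1+1) = fib n + fib (n+1) := Nat.fib_add_two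
    rw [ef]
    push_cast
    linear_combination (-1 : ℤ) * ih

lemma lDint (n : ℕ) : (lucas n : ℤ)^2 = 5*(fib n : ℤ)^2 + 4*(-1)^n := by
  have h1 := lE1 n
  have hL : (lucas n : ℤ) = 2 * fib (n+1) - fib n := by
    have h2 : ((lucas n + fib n : ℕ) : ℤ) = ((2 * fib (n+1) : ℕ) : ℤ) := by rw [h1]
    push_cast at h2
    linarith
  linear_combination ((lucas n : ℤ) + 2*fib (n+1) - fib n) * hL + 4 * lK n

lemma pell : ∀ y x : ℕ, x^2 + 4 = 5*y^2 → ∃ a, a % 2 = 1 ∧ x = lucas a ∧ y = fib a := by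
  intro y
  induction y using Nat.strong_induction_on with
  | _ y ih =>
  intro x hx
  by_cases hy1 : y ≤ 1
  · interval_cases y
    · exfalso; norm_num at hx
    · have hx1 : x = 1 := by
        rcases Nat.lt_or_ge x 2 with hc|hc
        · interval_cases x
          · norm_num at hx
          · rfl
        · exfalso
          have h9 : 2*2 ≤ x*x := Nat.mul_le_mul hc hc
          nlinarith
      exact ⟨1, rfl, by rw [hx1]; rfl, by rw [Nat.fib_one]⟩
  · push_neg at hy1
    have sq2 : ∀ n : ℕ, n^2 % 2 = n % 2 := by
      intro n
      rw [Nat.pow_mod]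
      rcases Nat.mod_two_eq_zero_or_one n with hc|hc <;> rw [hc]
    have hpar : x % 2 = y % 2 := by
      have h1 := sq2 x
      have h2 := sq2 y
      obtain ⟨X, hX⟩ : ∃ X, X = x^2 := ⟨_, rfl⟩
      obtain ⟨Y, hY⟩ : ∃ Y, Y = y^2 := ⟨_, rfl⟩
      rw [← hX] at h1 hx
      rw [← hY] at h2 hx
      omega
    have hb1 : 5*y ≤ 3*x := by
      by_contra hc
      push_neg at hc
      have h9 : (3*x)*(3*x) < (5*y)*(5*y) := Nat.mul_lt_mul'' hc hc
      have h10 : 2*2 ≤ y*y := Nat.mul_le_mul hy1 hy1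
      nlinarith
    have hb2 : x ≤ 3*y := by
      by_contra hc
      push_neg at hc
      have h9 : (3*y)*(3*y) < x*x := Nat.mul_lt_mul'' hc hc
      nlinarith
    obtain ⟨u, v, hu, hv⟩ : ∃ u v, 3*x = 5*y + 2*u ∧ 3*y = x + 2*v :=
      ⟨(3*x - 5*y)/2, (3*y - x)/2, by omega, by omega⟩
    have ex : 2*x = 3*u + 5*v := by omega
    have ey : 2*y = u + 3*v := by omega
    have huv : u^2 + 4 = 5*v^2 := by
      have hxz : (x:ℤ)^2 + 4 = 5*(y:ℤ)^2 := by exact_mod_cast hx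
      have exz : 2*(x:ℤ) = 3*(u:ℤ) + 5*(v:ℤ) := by exact_mod_cast ex
      have eyz : 2*(y:ℤ) = (u:ℤ) + 3*(v:ℤ) := by exact_mod_cast ey
      have h4 : 4*(u:ℤ)^2 + 16 = 20*(v:ℤ)^2 := by
        linear_combination 4*hxz - (2*(x:ℤ)+3*u+5*v)*exz + 5*(2*(y:ℤ)+u+3*v)*eyz
      have h4n : 4*u^2 + 16 = 20*v^2 := by exact_mod_cast h4
      obtain ⟨U, hU⟩ : ∃ U, U = u^2 := ⟨_, rfl⟩
      obtain ⟨V, hV⟩ : ∃ V, V = v^2 := ⟨_, rfl⟩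
      rw [← hU] at h4n ⊢
      rw [← hV] at h4n ⊢
      omega
    have hyx : y < x := by
      by_contra hc
      push_neg at hc
      have h9 : x*x ≤ y*y := Nat.mul_le_mul hc hc
      have h10 : 2*2 ≤ y*y := Nat.mul_le_mul hy1 hy1
      nlinarith
    have hvy : v < y := by omega
    obtain ⟨a, ha, hua, hva⟩ := ih v hvy u huv
    subst hua hva
    refine ⟨a+2, by omega, ?_, ?_⟩
    · have h6 := lE6 a
      omega
    · have h5 := lE5 a
      omega

theorem stmt12 (m : ℕ) (hm : 0 < m) (p q : ℕ) (hp : p.Prime) (hq : q.Prime)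
    (hpq : p < q)
    (h : p ^ 2 + q ^ 2 + Nat.fib (2 * m) ^ 2 = lucas (2 * m) * p * q) :
    (∃ k : ℕ, p = Nat.fib (2 * k + 1) ∧ q = Nat.fib (2 * k + 2 * m + 1)) ∨
    (∃ k : ℕ, k < m ∧
      ({p, q} : Set ℕ) = {Nat.fib (2 * k + 1), Nat.fib (2 * m - 2 * k - 1)}) := by
  have hp2 := hp.two_le
  have hq2 := hq.two_le
  have hz : (p:ℤ)^2 + (q:ℤ)^2 + (fib (2*m) : ℤ)^2 = (lucas (2*m) : ℤ)*p*q := by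
    exact_mod_cast h
  have hDe : (lucas (2*m) : ℤ)^2 = 5*(fib (2*m) : ℤ)^2 + 4 := by
    have hd := lDint (2*m)
    have e : ((-1:ℤ))^(2*m) = 1 := by rw [pow_mul]; norm_num
    rw [e] at hd
    linarith
  have ht : (2*(q:ℤ) - (lucas (2*m):ℤ)*p)^2 = (fib (2*m):ℤ)^2 * (5*(p:ℤ)^2 - 4) := by
    linear_combination 4*hz + (p:ℤ)^2 * hDe
  have h5pn : 4 ≤ 5*p^2 := by nlinarith
  set T : ℤ := 2*(q:ℤ) - (lucas (2*m):ℤ)*p with hT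
  have hnn : (T.natAbs : ℤ)^2 = ((fib (2*m)^2 * (5*p^2 - 4) : ℕ) : ℤ) := by
    push_cast [Nat.cast_sub h5pn]
    rw [sq_abs]
    linear_combination ht
  have hnn2 : T.natAbs^2 = fib (2*m)^2 * (5*p^2 - 4) := by exact_mod_cast hnn
  have hdvd : fib (2*m) ∣ T.natAbs :=
    (Nat.pow_dvd_pow_iff (two_ne_zero)).mp ⟨_, hnn2⟩
  obtain ⟨s, hs⟩ := hdvd
  have hFpos : 0 < fib (2*m) := Nat.fib_pos.mpr (by omega)
  have hseq : s^2 + 4 = 5*p^2 := by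
    have h1 : fib (2*m)^2 * s^2 = fib (2*m)^2 * (5*p^2 - 4) := by
      rw [← hnn2, hs]; ring
    have h2 := Nat.eq_of_mul_eq_mul_left (by positivity) h1
    rw [h2, Nat.sub_add_cancel h5pn]
  obtain ⟨a, haodd, hsa, hpa⟩ := pell p s hseq
  have hpz : (p:ℤ) = fib a := by exact_mod_cast hpa
  have hn' : (T.natAbs : ℤ) = (fib (2*m) : ℤ) * lucas a := by
    rw [hs, hsa]; push_cast; ring
  rcases Int.natAbs_eq T with he|he
  · -- T = natAbs : here 2q = L·F_a + F·L_a = 2·F_{a+2m}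
    left
    rw [hn'] at he
    rw [hT] at he
    have hC1 := (lC a (2*m)).1
    have hq2z : 2*(q:ℤ) = 2*(fib (a + 2*m) : ℤ) := by
      linear_combination he + (lucas (2*m):ℤ)*hpz - hC1
    have hqz : q = fib (a + 2*m) := by
      have : (q:ℤ) = (fib (a + 2*m) : ℤ) := by linarith
      exact_mod_cast this
    refine ⟨a/2, ?_, ?_⟩
    · rw [show 2*(a/2)+1 = a by omega]; exact hpa
    · rw [show 2*(a/2)+2*m+1 = a+2*m by omega]; exact hqz
  · rw [hn'] at he
    rw [hT] at he
    have heq : (lucas (2*m):ℤ)*(fib a) = 2*(q:ℤ) + (fib (2*m):ℤ)*(lucas a) := by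
      linear_combination (-1:ℤ)*he - (lucas (2*m):ℤ)*hpz
    rcases le_or_gt (2*m) a with hcase|hcase
    · exfalso
      obtain ⟨b, hab⟩ : ∃ b, a = 2*m + b := ⟨a - 2*m, by omega⟩
      rw [hab] at heq
      have h1 := (lC (2*m) b).1
      have h2 := (lC (2*m) b).2
      have hq4 : 4*(q:ℤ) = 4*(fib b : ℤ) := by
        linear_combination (-2:ℤ)*heq + (lucas (2*m):ℤ)*h1 - (fib (2*m):ℤ)*h2 + (fib b:ℤ)*hDe
      have hqb : q = fib b := by
        have : (q:ℤ) = (fib b : ℤ) := by linarith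
        exact_mod_cast this
      have hmono : fib b ≤ fib a := Nat.fib_mono (by omega)
      omega
    · right
      obtain ⟨b, hab⟩ : ∃ b, 2*m = a + b := ⟨2*m - a, by omega⟩
      have h1 := (lC a b).1
      have h2 := (lC a b).2
      rw [← hab] at h1 h2
      have hDo : (lucas a : ℤ)^2 = 5*(fib a : ℤ)^2 - 4 := by
        have hd := lDint a
        have e : ((-1:ℤ))^a = -1 := Odd.neg_one_pow (Nat.odd_iff.mpr haodd)
        rw [e] at hd
        linarith
      have hq4 : 4*(q:ℤ) = 4*(fib b : ℤ) := by
        linear_combination (-2:ℤ)*heq + (fib a:ℤ)*h2 - (lucas a:ℤ)*h1 - (fib b:ℤ)*hDo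
      have hqb : q = fib b := by
        have : (q:ℤ) = (fib b : ℤ) := by linarith
        exact_mod_cast this
      refine ⟨a/2, by omega, ?_⟩
      rw [show 2*(a/2)+1 = a by omega, show 2*m - 2*(a/2) - 1 = b by omega, hpa, hqb]
end

section
/- Fix a positive integer m. If p < q are primes satisfying p² + q² − (L_{2m}² − 4) = L_{2m}·p·q, then there exists a nonnegative integer k with p = L_{2k+1} and q = L_{2k+2m+1}. -/
lemma lucas_two (n : ℕ) : lucas (n+2) = lucas (n+1) + lucas n := rfl

lemma LF : ∀ n, 2 * lucas (n+1) = lucas n + 5 * Nat.fib n ∧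
    2 * Nat.fib (n+1) = lucas n + Nat.fib n
  | 0 => by simp [lucas]
  | 1 => by simp [lucas]
  | n + 2 => by
      obtain ⟨a1, a2⟩ := LF n
      have b1 : 2 * lucas (n+2) = lucas (n+1) + 5 * Nat.fib (n+1) := (LF (n+1)).1
      have b2 : 2 * Nat.fib (n+2) = lucas (n+1) + Nat.fib (n+1) := (LF (n+1)).2
      have e1 : lucas (n+2+1) = lucas (n+2) + lucas (n+1) := lucas_two (n+1)
      have e2 : lucas (n+2) = lucas (n+1) + lucas n := lucas_two n
      have e3 : Nat.fib (n+2+1) = Nat.fib (n+1) + Nat.fib (n+2) := Nat.fib_add_two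
      have e4 : Nat.fib (n+2) = Nat.fib n + Nat.fib (n+1) := Nat.fib_add_two
      omega

lemma lucas_pos : ∀ n, 0 < lucas n
  | 0 => by simp [lucas]
  | 1 => by simp [lucas]
  | n + 2 => by have := lucas_pos n; have := lucas_pos (n+1); rw [lucas_two]; omega

lemma lucas_lt_aux : ∀ d a, lucas (a+1) < lucas (a+1+d+1)
  | 0, a => by
      have h2 : lucas (a+1+0+1) = lucas (a+1) + lucas a := lucas_two a
      have := lucas_pos a
      omega
  | d + 1, a => by
      have h1 := lucas_lt_aux d a
      have h2 : lucas (a+1+(d+1)+1) = lucas (a+1+d+1) + lucas (a+1+d) := lucas_two (a+1+d)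
      have := lucas_pos (a+1+d)
      omega

lemma lucas_lt {a b : ℕ} (ha : 1 ≤ a) (hab : a < b) : lucas a < lucas b := by
  obtain ⟨c, rfl⟩ := Nat.exists_eq_add_of_le ha
  obtain ⟨d, rfl⟩ := Nat.exists_eq_add_of_lt hab
  have := lucas_lt_aux d (c)
  convert this using 2 <;> omega

lemma pell_s14 : ∀ n, (lucas n : ℤ)^2 - 5 * (Nat.fib n : ℤ)^2 = 4 * (-1 : ℤ)^n := by
  intro n
  induction n with
  | zero => simp [lucas]
  | succ n ih =>
    have h1 : (2 : ℤ) * lucas (n+1) = lucas n + 5 * Nat.fib n := by exact_mod_cast (LF n).1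
    have h2 : (2 : ℤ) * Nat.fib (n+1) = lucas n + Nat.fib n := by exact_mod_cast (LF n).2
    have s1 : ((2 : ℤ) * lucas (n+1))^2 = ((lucas n : ℤ) + 5 * Nat.fib n)^2 := by rw [h1]
    have s2 : ((2 : ℤ) * Nat.fib (n+1))^2 = ((lucas n : ℤ) + Nat.fib n)^2 := by rw [h2]
    have key : (4 : ℤ) * ((lucas (n+1) : ℤ)^2 - 5 * (Nat.fib (n+1) : ℤ)^2)
        = 4 * (4 * (-1 : ℤ)^(n+1)) := by
      have e : (-1 : ℤ)^(n+1) = -(-1 : ℤ)^n := by ring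
      rw [e]
      linear_combination s1 - 5 * s2 - 4 * ih
    linarith [key]

lemma addLF : ∀ b a, (2 * lucas (a+b) : ℤ) = (lucas a : ℤ) * lucas b + 5 * (Nat.fib a * Nat.fib b) ∧
    (2 * Nat.fib (a+b) : ℤ) = (lucas a : ℤ) * Nat.fib b + (Nat.fib a : ℤ) * lucas b
  | 0, a => by
      norm_num [lucas]
      constructor <;> ring
  | 1, a => by
      have h1 : (2 : ℤ) * lucas (a+1) = lucas a + 5 * Nat.fib a := by exact_mod_cast (LF a).1
      have h2 : (2 : ℤ) * Nat.fib (a+1) = lucas a + Nat.fib a := by exact_mod_cast (LF a).2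
      constructor
      · simp only [show lucas 1 = 1 from rfl, Nat.fib_one]; push_cast; linarith
      · simp only [show lucas 1 = 1 from rfl, Nat.fib_one]; push_cast; linarith
  | b + 2, a => by
      obtain ⟨a1, a2⟩ := addLF b a
      have b1 : (2 * lucas (a+(b+1)) : ℤ) = (lucas a : ℤ) * lucas (b+1) + 5 * (Nat.fib a * Nat.fib (b+1)) := (addLF (b+1) a).1
      have b2 : (2 * Nat.fib (a+(b+1)) : ℤ) = (lucas a : ℤ) * Nat.fib (b+1) + (Nat.fib a : ℤ) * lucas (b+1) := (addLF (b+1) a).2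
      have e1 : (lucas (a+(b+2)) : ℤ) = lucas (a+(b+1)) + lucas (a+b) := by exact_mod_cast lucas_two (a+b)
      have e2 : (lucas (b+2) : ℤ) = lucas (b+1) + lucas b := by exact_mod_cast lucas_two b
      have e3 : (Nat.fib (a+(b+2)) : ℤ) = Nat.fib (a+(b+1)) + Nat.fib (a+b) := by
        exact_mod_cast (Nat.fib_add_two (n := a+b)).trans (Nat.add_comm _ _)
      have e4 : (Nat.fib (b+2) : ℤ) = Nat.fib (b+1) + Nat.fib b := by
        exact_mod_cast (Nat.fib_add_two (n := b)).trans (Nat.add_comm _ _)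
      constructor
      · rw [e1, e2, e4]; push_cast; linarith [a1, b1]
      · rw [e3, e4, e2]; push_cast; linarith [a2, b2]

lemma subL (a b : ℕ) : (lucas (a+b) : ℤ) * lucas b - 5 * Nat.fib (a+b) * Nat.fib b
    = 2 * (-1 : ℤ)^b * lucas a := by
  have h1 := (addLF b a).1
  have h2 := (addLF b a).2
  have hp := pell_s14 b
  have key : (2 : ℤ) * ((lucas (a+b) : ℤ) * lucas b - 5 * Nat.fib (a+b) * Nat.fib b)
      = 2 * (2 * (-1 : ℤ)^b * lucas a) := by
    linear_combination (lucas b : ℤ) * h1 - 5 * (Nat.fib b : ℤ) * h2 + (lucas a : ℤ) * hp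
  linarith [key]

lemma pell_solve : ∀ v u : ℕ, 0 < u → u^2 + 4 = 5 * v^2 →
    ∃ j, u = lucas (2*j+1) ∧ v = Nat.fib (2*j+1) := by
  intro v
  induction v using Nat.strong_induction_on with
  | _ v IH =>
    intro u hu h
    have hv : 1 ≤ v := by nlinarith
    rcases eq_or_lt_of_le hv with hv1 | hv2
    · -- v = 1
      have hu1 : u = 1 := by nlinarith
      exact ⟨0, by simp [hu1, lucas], by simp [← hv1]⟩
    · -- v ≥ 2
      have huv : v < u := by nlinarith
      have hu3v : u < 3 * v := by nlinarith
      -- same parity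
      have hpar : Even (u - v) := by
        rcases Nat.even_or_odd (u - v) with he | ho
        · exact he
        · exfalso
          obtain ⟨c, hc⟩ := ho
          have hc' : u = v + 2*c + 1 := by omega
          have hz : ((v:ℤ) + 2*c + 1)^2 + 4 = 5 * (v:ℤ)^2 := by
            have : ((u:ℤ))^2 + 4 = 5 * (v:ℤ)^2 := by exact_mod_cast h
            rw [hc'] at this; push_cast at this; linarith
          have hdvd : (2:ℤ) ∣ 5 :=
            ⟨2*(v:ℤ)^2 - 2*(c:ℤ)^2 - 2*c*v - 2*c - (v:ℤ), by linear_combination hz⟩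
          norm_num at hdvd
      obtain ⟨t, ht⟩ : ∃ t, u = v + 2 * t := by
        obtain ⟨c, hc⟩ := hpar
        exact ⟨c, by omega⟩
      have hz : ((v:ℤ) + 2*t)^2 + 4 = 5 * (v:ℤ)^2 := by
        have : ((u:ℤ))^2 + 4 = 5 * (v:ℤ)^2 := by exact_mod_cast h
        rw [ht] at this; push_cast at this; linarith
      have key4 : 4*((t:ℤ)^2 + v*t + 1) = 4*(v:ℤ)^2 := by linear_combination hz
      have keyz : (t:ℤ)^2 + (v:ℤ)*t + 1 = (v:ℤ)^2 := by linarith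
      have key : t^2 + v*t + 1 = v^2 := by exact_mod_cast keyz
      have ht1 : 1 ≤ t := by omega
      have htv : t < v := by omega
      have h3t : v < 3 * t := by nlinarith
      obtain ⟨u', hA⟩ : ∃ u', u' + v = 3 * t := ⟨3*t - v, by omega⟩
      obtain ⟨v', hB⟩ : ∃ v', v' + t = v := ⟨v - t, by omega⟩
      have hAz : (u':ℤ) + v = 3 * t := by exact_mod_cast hA
      have hBz : (v':ℤ) + t = v := by exact_mod_cast hB
      have ez : (u':ℤ)^2 + 4 = 5 * (v':ℤ)^2 := by
        linear_combination ((u':ℤ) - v + 3*t) * hAz - 5*((v':ℤ) - t + v) * hBz + 4 * keyz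
      have e : u'^2 + 4 = 5 * v'^2 := by exact_mod_cast ez
      have hv'v : v' < v := by omega
      have hu'0 : 0 < u' := by omega
      obtain ⟨j, hj1, hj2⟩ := IH v' hv'v u' hu'0 e
      refine ⟨j + 1, ?_, ?_⟩
      · have L3 : 2 * lucas (2*j+1+2) = 3 * lucas (2*j+1) + 5 * Nat.fib (2*j+1) := by
          have := (LF (2*j+1)).1
          have e1 : lucas (2*j+1+2) = lucas (2*j+1+1) + lucas (2*j+1) := lucas_two (2*j+1)
          omega
        have he : 2*(j+1)+1 = 2*j+1+2 := by omega
        rw [he]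
        omega
      · have F3 : 2 * Nat.fib (2*j+1+2) = lucas (2*j+1) + 3 * Nat.fib (2*j+1) := by
          have := (LF (2*j+1)).2
          have e1 : Nat.fib (2*j+1+2) = Nat.fib (2*j+1) + Nat.fib (2*j+1+1) := Nat.fib_add_two
          omega
        have he : 2*(j+1)+1 = 2*j+1+2 := by omega
        rw [he]
        omega

theorem stmt14 (m : ℕ) (hm : 0 < m) (p q : ℕ) (hp : p.Prime) (hq : q.Prime)
    (hpq : p < q)
    (h : (p : ℤ) ^ 2 + (q : ℤ) ^ 2 - ((lucas (2 * m) : ℤ) ^ 2 - 4) =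
      (lucas (2 * m) : ℤ) * p * q) :
    ∃ k : ℕ, p = lucas (2 * k + 1) ∧ q = lucas (2 * k + 2 * m + 1) := by
  have hF : 0 < Nat.fib (2*m) := Nat.fib_pos.mpr (by omega)
  have hFz : (0:ℤ) < (Nat.fib (2*m) : ℤ) := by exact_mod_cast hF
  have hpe : (lucas (2*m) : ℤ)^2 = 5 * (Nat.fib (2*m) : ℤ)^2 + 4 := by
    have := pell_s14 (2*m)
    have e : (-1:ℤ)^(2*m) = 1 := by rw [pow_mul]; norm_num
    rw [e] at this; linarith
  -- key square identity
  have hU2 : (2*(q:ℤ) - lucas (2*m) * p)^2 = (Nat.fib (2*m) : ℤ)^2 * (5 * ((p:ℤ)^2 + 4)) := by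
    linear_combination 4 * h + ((p:ℤ)^2 + 4) * hpe
  have hdvd : ((Nat.fib (2*m) : ℤ))^2 ∣ (2*(q:ℤ) - lucas (2*m) * p)^2 := ⟨_, hU2⟩
  have hdvd' : ((Nat.fib (2*m) : ℤ)) ∣ (2*(q:ℤ) - lucas (2*m) * p) := by
    exact (Int.pow_dvd_pow_iff (by norm_num)).mp hdvd
  obtain ⟨W, hW⟩ := hdvd'
  have hW2 : W^2 = 5 * ((p:ℤ)^2 + 4) := by
    have h2 : (Nat.fib (2*m) : ℤ)^2 * W^2 = (Nat.fib (2*m) : ℤ)^2 * (5 * ((p:ℤ)^2+4)) := by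
      rw [← hU2, hW]; ring
    exact mul_left_cancel₀ (by positivity) h2
  have h5W : (5:ℤ) ∣ W := by
    have hp5 : Prime (5:ℤ) := by norm_num
    exact hp5.dvd_of_dvd_pow (n := 2) ⟨(p:ℤ)^2 + 4, hW2⟩
  obtain ⟨w0, hw0⟩ := h5W
  have hw02 : (p:ℤ)^2 + 4 = 5 * w0^2 := by
    have : (5*w0)^2 = 5 * ((p:ℤ)^2+4) := by rw [← hw0]; exact hW2
    linarith [this, sq_nonneg w0]
  set w := w0.natAbs with hwdef
  have hwz : ((w:ℤ))^2 = w0^2 := by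
    rw [hwdef]; push_cast [Int.natAbs_sq]; ring_nf; simp [Int.natAbs_sq]
  have hwnat : p^2 + 4 = 5 * w^2 := by
    have : ((p:ℤ))^2 + 4 = 5 * ((w:ℤ))^2 := by rw [hwz]; exact hw02
    exact_mod_cast this
  obtain ⟨j, hpj, hwj⟩ := pell_solve w p hp.pos hwnat
  have hpjz : (p:ℤ) = lucas (2*j+1) := by exact_mod_cast hpj
  have hwjz : (w:ℤ) = Nat.fib (2*j+1) := by exact_mod_cast hwj
  have hq2 : 2*(q:ℤ) = (lucas (2*m) : ℤ) * p + (Nat.fib (2*m) : ℤ) * W := by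
    linarith [hW]
  rcases le_or_gt 0 w0 with hpos | hneg
  · -- W = 5w, q = lucas (2j+2m+1)
    have hww : (w:ℤ) = w0 := by rw [hwdef]; exact_mod_cast Int.natAbs_of_nonneg hpos
    have hadd := (addLF (2*m) (2*j+1)).1
    have h2q : 2*(q:ℤ) = 2*(lucas (2*j+1+2*m) : ℤ) := by
      rw [hadd, ← hpjz, ← hwjz]
      rw [hq2, hw0, ← hww]
      ring
    have hqn : q = lucas (2*j+1+2*m) := by
      have : (q:ℤ) = (lucas (2*j+1+2*m) : ℤ) := by linarith
      exact_mod_cast this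
    refine ⟨j, hpj, ?_⟩
    rw [hqn]
    congr 1
    omega
  · -- W = -5w : contradiction
    have hww : (w:ℤ) = -w0 := by
      rw [hwdef]
      rw [Int.ofNat_natAbs_of_nonpos (by omega)]
    have hq2' : 2*(q:ℤ) = (lucas (2*m) : ℤ) * lucas (2*j+1) - 5 * (Nat.fib (2*m) : ℤ) * Nat.fib (2*j+1) := by
      rw [← hpjz, ← hwjz, hq2, hw0]
      have : (w0:ℤ) = -(w:ℤ) := by rw [hww]; ring
      rw [this]; ring
    rcases le_or_gt m j with hmj | hjm
    · -- q = lucas (2(j-m)+1) < p, contradiction with p < q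
      exfalso
      have ha : (2*(j-m)+1) + 2*m = 2*j+1 := by omega
      have hsub := subL (2*(j-m)+1) (2*m)
      rw [ha] at hsub
      have he : (-1:ℤ)^(2*m) = 1 := by rw [pow_mul]; norm_num
      rw [he] at hsub
      have h2q : 2*(q:ℤ) = 2*(lucas (2*(j-m)+1) : ℤ) := by
        rw [hq2']; linarith [hsub]
      have hlt : lucas (2*(j-m)+1) < lucas (2*j+1) := lucas_lt (by omega) (by omega)
      have hqlt : (q:ℤ) < (p:ℤ) := by
        have : (lucas (2*(j-m)+1) : ℤ) < (lucas (2*j+1) : ℤ) := by exact_mod_cast hlt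
        rw [hpjz]
        linarith
      have : (p:ℤ) < (q:ℤ) := by exact_mod_cast hpq
      linarith
    · -- 2q = -2 lucas a < 0, contradiction
      exfalso
      have ha : (2*(m-j)-1) + (2*j+1) = 2*m := by omega
      have hsub := subL (2*(m-j)-1) (2*j+1)
      rw [ha] at hsub
      have he : (-1:ℤ)^(2*j+1) = -1 := Odd.neg_one_pow ⟨j, by ring⟩
      rw [he] at hsub
      have h2q : 2*(q:ℤ) = -2*(lucas (2*(m-j)-1) : ℤ) := by
        rw [hq2']; linarith [hsub]
      have hlp : (0:ℤ) < lucas (2*(m-j)-1) := by exact_mod_cast lucas_pos (2*(m-j)-1)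
      have hq0 : (0:ℤ) < q := by exact_mod_cast hq.pos
      linarith
end

section
/- Fix a positive integer m. If p < q are primes satisfying p² + q² + (L_{2m}² − 4) = L_{2m}·p·q, then either there exists k ≥ 0 with p = L_{2k}, q = L_{2k+2m}, or there exists 0 ≤ k ≤ m with k ≠ m/2 and {p, q} = {L_{2k}, L_{2m-2k}}. -/
namespace Stmt16Aux

def vs (t : ℤ) : ℕ → ℤ
  | 0 => 2
  | 1 => t
  | n + 2 => t * vs t (n + 1) - vs t n

def us (t : ℤ) : ℕ → ℤ
  | 0 => 0
  | 1 => 1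
  | n + 2 => t * us t (n + 1) - us t n

lemma two_step {P : ℕ → Prop} (h0 : P 0) (h1 : P 1)
    (h : ∀ n, P n → P (n + 1) → P (n + 2)) : ∀ n, P n := by
  have key : ∀ n, P n ∧ P (n + 1) := by
    intro n
    induction n with
    | zero => exact ⟨h0, h1⟩
    | succ k ih => exact ⟨ih.2, h k ih.1 ih.2⟩
  exact fun n => (key n).1

lemma vs_rec (t : ℤ) (n : ℕ) : vs t (n + 2) = t * vs t (n + 1) - vs t n := rfl
lemma us_rec (t : ℤ) (n : ℕ) : us t (n + 2) = t * us t (n + 1) - us t n := rfl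
@[simp] lemma vs_zero (t : ℤ) : vs t 0 = 2 := rfl
@[simp] lemma vs_one (t : ℤ) : vs t 1 = t := rfl
@[simp] lemma us_zero (t : ℤ) : us t 0 = 0 := rfl
@[simp] lemma us_one (t : ℤ) : us t 1 = 1 := rfl
lemma vs_two' (t : ℤ) : vs t 2 = t * t - 2 := by
  have := vs_rec t 0; simpa using this
lemma us_two' (t : ℤ) : us t 2 = t := by
  have := us_rec t 0; simpa using this

lemma vs_ge_two_and_mono {t : ℤ} (ht : 2 ≤ t) :
    ∀ n, 2 ≤ vs t n ∧ vs t n ≤ vs t (n + 1) := by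
  refine two_step ⟨by norm_num, by simpa using ht⟩ ⟨by simpa using ht, ?_⟩ ?_
  · show vs t 1 ≤ vs t 2
    rw [vs_two', vs_one]; nlinarith
  · rintro n ⟨h1, h2⟩ ⟨h3, h4⟩
    have hA : 2 ≤ vs t (n + 2) := by linarith
    refine ⟨hA, ?_⟩
    rw [vs_rec t (n + 1)]
    nlinarith [mul_nonneg (by linarith : (0:ℤ) ≤ t - 2) (by linarith : (0:ℤ) ≤ vs t (n+2))]

lemma vs_ge_two {t : ℤ} (ht : 2 ≤ t) (n : ℕ) : 2 ≤ vs t n := (vs_ge_two_and_mono ht n).1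

lemma vs_mono {t : ℤ} (ht : 2 ≤ t) : Monotone (vs t) :=
  monotone_nat_of_le_succ (fun n => (vs_ge_two_and_mono ht n).2)

lemma vs_strictMono {t : ℤ} (ht : 3 ≤ t) : StrictMono (vs t) := by
  apply strictMono_nat_of_lt_succ
  have h := vs_ge_two_and_mono (t := t) (by linarith)
  refine two_step ?_ ?_ ?_
  · show vs t 0 < vs t 1; rw [vs_zero, vs_one]; linarith
  · show vs t 1 < vs t 2; rw [vs_two', vs_one]; nlinarith
  · intro n h1 h2
    rw [vs_rec t (n + 1)]
    have hA := (h (n + 2)).1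
    have hB := (h (n + 1)).1
    nlinarith [mul_nonneg (by linarith : (0:ℤ) ≤ t - 3) (by linarith : (0:ℤ) ≤ vs t (n+2))]

lemma us_nonneg_and_mono {t : ℤ} (ht : 2 ≤ t) :
    ∀ n, 0 ≤ us t n ∧ us t n ≤ us t (n + 1) := by
  refine two_step ⟨le_refl 0, by norm_num⟩ ⟨by norm_num, ?_⟩ ?_
  · show us t 1 ≤ us t 2; rw [us_two', us_one]; linarith
  · rintro n ⟨h1, h2⟩ ⟨h3, h4⟩
    have hA : 0 ≤ us t (n + 2) := by linarith
    refine ⟨hA, ?_⟩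
    rw [us_rec t (n + 1)]
    nlinarith [mul_nonneg (by linarith : (0:ℤ) ≤ t - 2) hA]

lemma us_pos {t : ℤ} (ht : 2 ≤ t) {n : ℕ} (hn : 1 ≤ n) : 1 ≤ us t n := by
  have h : ∀ k, (1 : ℤ) ≤ us t (k + 1) := by
    intro k
    induction k with
    | zero => norm_num
    | succ k ih => calc (1:ℤ) ≤ us t (k+1) := ih
                   _ ≤ us t (k+2) := (us_nonneg_and_mono ht (k+1)).2
  obtain ⟨k, rfl⟩ := Nat.exists_eq_add_of_le hn
  simpa [Nat.add_comm] using h k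

lemma vs_two (n : ℕ) : vs 2 n = 2 := by
  induction n using two_step with
  | h0 => rfl
  | h1 => rfl
  | h n h1 h2 => rw [vs_rec, h1, h2]; ring

/-- product identity: vs_i * vs_{i+d} = vs_{2i+d} + vs_d -/
lemma vs_mul (t : ℤ) : ∀ i d : ℕ, vs t i * vs t (i + d) = vs t (2 * i + d) + vs t d := by
  refine two_step ?_ ?_ ?_
  · intro d
    simp only [Nat.zero_add, Nat.mul_zero, vs_zero]
    ring
  · intro d
    rw [show 1 + d = d + 1 from by omega, show 2 * 1 + d = d + 2 from by omega,
      vs_rec t d, vs_one]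
    ring
  · intro i ih1 ih2 d
    have h1 := ih2 (d + 1)
    have h2 := ih1 (d + 2)
    have r1 : vs t (i + 2) = t * vs t (i + 1) - vs t i := vs_rec t i
    have r2 : vs t (2*i+d+4) = t * vs t (2*i+d+3) - vs t (2*i+d+2) := vs_rec t (2*i+d+2)
    have r3 : vs t (d + 2) = t * vs t (d + 1) - vs t d := vs_rec t d
    rw [show i + 1 + (d+1) = i + d + 2 from by omega,
        show 2*(i+1)+(d+1) = 2*i+d+3 from by omega] at h1
    rw [show i + (d+2) = i + d + 2 from by omega,
        show 2*i+(d+2) = 2*i+d+2 from by omega] at h2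
    rw [show (i+2)+d = i+d+2 from by omega, show 2*(i+2)+d = 2*i+d+4 from by omega,
        r1, r2]
    linear_combination t * h1 - h2 - r3

/-- Pell-type identity for vs/us -/
lemma vs_us_pell (t : ℤ) : ∀ n : ℕ,
    vs t n ^ 2 - (t ^ 2 - 4) * us t n ^ 2 = 4 ∧
    vs t (n+1) * vs t n - (t ^ 2 - 4) * (us t (n+1) * us t n) = 2 * t := by
  refine two_step ⟨by norm_num, by simp; ring⟩ ⟨by simp, ?_⟩ ?_
  · rw [vs_two', us_two', vs_one, us_one]; ring
  · rintro n ⟨hP, hQ⟩ ⟨hP1, hQ1⟩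
    simp only [show n+1+1 = n+2 from rfl, show n+1+2 = n+3 from rfl,
      show n+2+1 = n+3 from rfl] at *
    have r1 := vs_rec t n
    have r2 := us_rec t n
    have r3 := vs_rec t (n + 1)
    have r4 := us_rec t (n + 1)
    simp only [show n+1+1 = n+2 from rfl, show n+1+2 = n+3 from rfl,
      show n+2+1 = n+3 from rfl] at r3 r4
    have hP2 : vs t (n+2) ^ 2 - (t ^ 2 - 4) * us t (n+2) ^ 2 = 4 := by
      rw [r1, r2]
      linear_combination t^2 * hP1 - 2 * t * hQ + hP
    refine ⟨hP2, ?_⟩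
    rw [r3, r4]
    linear_combination t * hP2 - hQ1

/-- lucas at even indices equals vs 3 -/
lemma lucas_cast (n : ℕ) : (lucas (n + 2) : ℤ) = (lucas (n+1) : ℤ) + (lucas n : ℤ) := by
  push_cast [lucas]; ring

lemma lucas_v3 : ∀ n : ℕ, (lucas (2 * n) : ℤ) = vs 3 n := by
  refine two_step (by norm_num [lucas]) (by norm_num [lucas]) ?_
  · intro n h1 h2
    have e1 : 2 * (n + 2) = (2*n + 2) + 2 := by omega
    have e2 : 2 * (n + 1) = 2*n + 2 := by omega
    rw [e1, lucas_cast, show 2*n+2 = (2*n)+2 from rfl, lucas_cast,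
      show (2*n)+1+1 = (2*n)+1+1 from rfl]
    have h3 : (lucas (2*n+1+1) : ℤ) = (lucas (2*n+1) : ℤ) + lucas (2*n) := lucas_cast (2*n)
    rw [e2] at h2
    rw [vs_rec]
    push_cast at *
    linarith

lemma vs_compose (s : ℕ) : ∀ n : ℕ, vs (vs 3 s) n = vs 3 (s * n) := by
  refine two_step (by simp) (by simp) ?_
  intro n h1 h2
  rw [vs_rec, h1, h2]
  have hm2 := vs_mul 3 s (s * n)
  rw [show s + s * n = s * (n+1) from by ring, show 2*s + s*n = s*(n+2) from by ring] at hm2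
  linear_combination hm2

/-- halving identities at t = 3 -/
lemma v3_succ : ∀ n : ℕ, 2 * vs 3 (n + 1) = 3 * vs 3 n + 5 * us 3 n := by
  refine two_step (by norm_num) (by rw [vs_two']; norm_num) ?_
  intro n h1 h2
  simp only [show n+1+1 = n+2 from rfl, show n+2+1 = n+3 from rfl] at *
  have r1 := vs_rec 3 n
  have r2 := us_rec 3 n
  have r3 := vs_rec 3 (n+1)
  simp only [show n+1+1 = n+2 from rfl, show n+1+2 = n+3 from rfl] at r3
  rw [r3, r1, r2]
  linarith

lemma u3_succ : ∀ n : ℕ, 2 * us 3 (n + 1) = vs 3 n + 3 * us 3 n := by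
  refine two_step (by norm_num) (by rw [us_two']; norm_num) ?_
  intro n h1 h2
  simp only [show n+1+1 = n+2 from rfl, show n+2+1 = n+3 from rfl] at *
  have r1 := vs_rec 3 n
  have r2 := us_rec 3 n
  have r3 := us_rec 3 (n+1)
  simp only [show n+1+1 = n+2 from rfl, show n+1+2 = n+3 from rfl] at r3
  rw [r3, r2, r1]
  linarith



/-- Pell equation x^2 - 5 y^2 = 4 : all solutions are (vs 3 s, us 3 s) -/
lemma pell_sol : ∀ N : ℕ, ∀ t e : ℤ, 0 ≤ e → e ≤ (N : ℤ) → 2 ≤ t →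
    t ^ 2 - 5 * e ^ 2 = 4 → ∃ s : ℕ, t = vs 3 s ∧ e = us 3 s := by
  intro N
  induction N with
  | zero =>
    intro t e he heN ht heq
    have he0 : e = 0 := le_antisymm (by exact_mod_cast heN) he
    subst he0
    have h4 : (t - 2) * (t + 2) = 0 := by linear_combination heq
    rcases mul_eq_zero.mp h4 with h | h
    · exact ⟨0, by simp; linarith, by simp⟩
    · exfalso; linarith
  | succ N ih =>
    intro t e he heN ht heq
    rcases eq_or_lt_of_le he with he0 | he1
    · subst he0
      have h4 : (t - 2) * (t + 2) = 0 := by linear_combination heq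
      rcases mul_eq_zero.mp h4 with h | h
      · exact ⟨0, by simp; linarith, by simp⟩
      · exfalso; linarith
    · have he1' : 1 ≤ e := he1
      -- parity of t and e
      have heq' : t * t - 5 * (e * e) = 4 := by linear_combination heq
      have h7 : t * t % 2 = t % 2 := by
        rcases Int.emod_two_eq t with h | h <;> rw [Int.mul_emod, h] <;> norm_num
      have h8 : e * e % 2 = e % 2 := by
        rcases Int.emod_two_eq e with h | h <;> rw [Int.mul_emod, h] <;> norm_num
      have hpar : t % 2 = e % 2 := by
        generalize hT : t * t = T at heq' h7
        generalize hE : e * e = E at heq' h8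
        omega
      obtain ⟨c, hc⟩ : ∃ c, t = e + 2 * c := ⟨(t - e) / 2, by omega⟩
      subst hc
      -- c ≥ 1
      have hc1 : 1 ≤ c := by
        by_contra hcon
        push_neg at hcon
        have hcon' : c ≤ 0 := by omega
        nlinarith [mul_nonneg (by linarith : (0:ℤ) ≤ -2*c) (by linarith : (0:ℤ) ≤ e + 2*c),
          mul_nonneg (by linarith : (0:ℤ) ≤ -2*c) (by linarith : (0:ℤ) ≤ e)]
      -- c ≤ e
      have hprod : (3*e - (e + 2*c)) * (3*e + (e + 2*c)) = 4*e^2 - 4 := by linear_combination -heq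
      have h3et : 0 ≤ 3*e - (e + 2*c) := by
        by_contra hcon
        push_neg at hcon
        have h1 : (0:ℤ) < 3*e + (e + 2*c) := by linarith
        have h2 : (3*e - (e + 2*c)) * (3*e + (e + 2*c)) < 0 :=
          mul_neg_of_neg_of_pos (by linarith) h1
        nlinarith [he1']
      have hce : c ≤ e := by omega
      -- new solution
      have heq2 : (3*c - e)^2 - 5*(e - c)^2 = 4 := by linear_combination heq
      have hpos : 0 < 3*c - e := by
        by_contra hcon
        push_neg at hcon
        have hqq : (2*(3*c - e)) * (3*(e + 2*c) + 5*e) = 20*e^2 + 36 := by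
          linear_combination 9 * heq
        have h5 : (2*(3*c - e)) * (3*(e + 2*c) + 5*e) ≤ 0 :=
          mul_nonpos_of_nonpos_of_nonneg (by linarith) (by linarith)
        nlinarith [sq_nonneg e]
      have ht'2 : 2 ≤ 3*c - e := by
        nlinarith [sq_nonneg (e - c), hpos]
      have he'N : e - c ≤ (N : ℤ) := by push_cast at heN; omega
      obtain ⟨s, hs1, hs2⟩ := ih (3*c - e) (e - c) (by omega) he'N ht'2 heq2
      refine ⟨s + 1, ?_, ?_⟩
      · have hv := v3_succ s
        rw [← hs1, ← hs2] at hv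
        linarith
      · have hu := u3_succ s
        rw [← hs1, ← hs2] at hu
        linarith


lemma key {m k : ℕ} (hm : 1 ≤ m) {t : ℤ} (ht : 2 ≤ t)
    (hk : vs t k = vs 3 m) : ∃ s : ℕ, t = vs 3 s ∧ s * k = m := by
  have h3m : (3:ℤ) ≤ vs 3 m := by
    have := vs_mono (t := 3) (by norm_num) (show 1 ≤ m from hm)
    simpa using this
  have ht3 : 3 ≤ t := by
    rcases eq_or_lt_of_le ht with h | h
    · exfalso
      rw [← h, vs_two] at hk
      linarith
    · exact h
  have hk1 : 1 ≤ k := by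
    rcases Nat.eq_zero_or_pos k with h | h
    · exfalso; subst h; simp at hk; linarith
    · exact h
  have hA := (vs_us_pell t k).1
  have hB := (vs_us_pell 3 m).1
  rw [hk] at hA
  have hAB : (t ^ 2 - 4) * us t k ^ 2 = 5 * us 3 m ^ 2 := by
    norm_num at hB
    linarith
  have hA1 : (1:ℤ) ≤ us t k := us_pos (by linarith) hk1
  have hB1 : (1:ℤ) ≤ us 3 m := us_pos (by norm_num) hm
  obtain ⟨A, hA'⟩ : ∃ A : ℕ, us t k = (A:ℤ) :=
    ⟨(us t k).toNat, (Int.toNat_of_nonneg (by linarith)).symm⟩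
  obtain ⟨B, hB'⟩ : ∃ B : ℕ, us 3 m = (B:ℤ) :=
    ⟨(us 3 m).toNat, (Int.toNat_of_nonneg (by linarith)).symm⟩
  obtain ⟨D, hD'⟩ : ∃ D : ℕ, t ^ 2 - 4 = (D:ℤ) :=
    ⟨(t^2 - 4).toNat, (Int.toNat_of_nonneg (by nlinarith)).symm⟩
  have hDAB : D * A ^ 2 = 5 * B ^ 2 := by
    have : (D:ℤ) * (A:ℤ) ^ 2 = 5 * (B:ℤ) ^ 2 := by rw [← hA', ← hB', ← hD']; exact hAB
    exact_mod_cast this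
  have hApos : 0 < A := by
    have : (1:ℤ) ≤ (A:ℤ) := by rw [← hA']; exact hA1
    exact_mod_cast this
  have hBpos : 0 < B := by
    have : (1:ℤ) ≤ (B:ℤ) := by rw [← hB']; exact hB1
    exact_mod_cast this
  set g := Nat.gcd A B with hg
  have hgpos : 0 < g := Nat.gcd_pos_of_pos_left _ hApos
  set a' := A / g with ha'
  set b' := B / g with hb'
  have hA2 : A = g * a' := (Nat.mul_div_cancel' (Nat.gcd_dvd_left A B)).symm
  have hB2 : B = g * b' := (Nat.mul_div_cancel' (Nat.gcd_dvd_right A B)).symm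
  have hcop : Nat.Coprime a' b' := Nat.coprime_div_gcd_div_gcd hgpos
  have heq3 : D * a' ^ 2 = 5 * b' ^ 2 := by
    have h1 : g ^ 2 * (D * a' ^ 2) = g ^ 2 * (5 * b' ^ 2) := by
      rw [hA2, hB2] at hDAB
      ring_nf at hDAB ⊢
      linarith [hDAB]
    exact Nat.eq_of_mul_eq_mul_left (by positivity) h1
  have hdvd : a' ^ 2 ∣ 5 := by
    have h1 : a' ^ 2 ∣ 5 * b' ^ 2 := ⟨D, by rw [← heq3]; ring⟩
    exact Nat.Coprime.dvd_of_dvd_mul_right (Nat.Coprime.pow 2 2 hcop) h1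
  have ha'1 : a' = 1 := by
    have h5 : a' ^ 2 ≤ 5 := Nat.le_of_dvd (by norm_num) hdvd
    have ha0 : a' ≠ 0 := by
      rintro h0
      rw [h0, Nat.mul_zero] at hA2
      omega
    have h2 : a' ≤ 2 := by nlinarith
    interval_cases a'
    · exact absurd rfl ha0
    · rfl
    · exfalso; revert hdvd; decide
  rw [ha'1] at heq3
  simp only [one_pow, mul_one] at heq3
  have hDe : t ^ 2 - 5 * (b' : ℤ) ^ 2 = 4 := by
    have h1 : (D:ℤ) = 5 * (b':ℤ) ^ 2 := by exact_mod_cast heq3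
    rw [h1] at hD'
    linarith
  obtain ⟨s, hs1, _⟩ := pell_sol b' t (b' : ℤ) (by positivity) (le_refl _) ht hDe
  have hcomp := vs_compose s k
  rw [← hs1] at hcomp
  rw [hcomp] at hk
  exact ⟨s, hs1, (vs_strictMono (t := 3) (by norm_num)).injective hk⟩


/-- classification of solutions of the Markov-like equation a²+b²+c²-4 = abc -/
lemma classify : ∀ N : ℕ, ∀ a b c : ℤ, (a + b + c).toNat ≤ N → 2 ≤ a → a ≤ b → b ≤ c →
    a ^ 2 + b ^ 2 + c ^ 2 - 4 = a * b * c →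
    ∃ (t : ℤ) (i j : ℕ), 2 ≤ t ∧ a = vs t i ∧ b = vs t j ∧ c = vs t (i + j) := by
  intro N
  induction N with
  | zero => intro a b c hN h2a hab hbc heq; exfalso; omega
  | succ N ih =>
    intro a b c hN h2a hab hbc heq
    by_cases hbase : 2 * c ≤ a * b
    · -- minimal triple: a = 2, b = c
      have ha2 : a = 2 := by
        by_contra hcon
        have ha3 : 3 ≤ a := by omega
        have h1 : (0:ℤ) ≤ (c - b) * (a*b - c - b) :=
          mul_nonneg (by linarith) (by linarith)
        have hE : (a - 2) * (a + 2 - b^2) = (c - b) * (a*b - c - b) := by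
          linear_combination heq
        have h2 : (0:ℤ) ≤ (a - 2) * (a + 2 - b^2) := by rw [hE]; exact h1
        have h3 : b^2 ≤ a + 2 := by
          by_contra hcon2
          push_neg at hcon2
          have : (a-2)*(a+2-b^2) < 0 := mul_neg_of_pos_of_neg (by linarith) (by linarith)
          linarith
        have hb3 : (3:ℤ) ≤ b := by linarith
        nlinarith [mul_le_mul_of_nonneg_right hb3 (by linarith : (0:ℤ) ≤ b)]
      have hbc2 : b = c := by
        rw [ha2] at heq
        have h0 : (b - c)^2 = 0 := by linear_combination heq
        have := sq_eq_zero_iff.mp h0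
        linarith
      exact ⟨b, 0, 1, by linarith, by rw [ha2]; rfl, rfl, hbc2.symm⟩
    · push_neg at hbase  -- a*b < 2*c
      set c' : ℤ := a*b - c with hc'def
      have hvieta : c' * c = a^2 + b^2 - 4 := by rw [hc'def]; linear_combination -heq
      have heq' : a^2 + b^2 + c'^2 - 4 = a * b * c' := by rw [hc'def]; linear_combination heq
      have hcc : c' < c := by rw [hc'def]; linarith
      have hc2 : 2 ≤ c' := by
        have hpos : 0 < c' := by
          by_contra hcon
          push_neg at hcon
          nlinarith [hvieta]
        have hne1 : c' ≠ 1 := by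
          intro h1
          rw [h1, one_mul] at hvieta
          rw [hc'def] at h1
          nlinarith [sq_nonneg (a - b)]
        omega
      have hcval : c = a * b - c' := by rw [hc'def]; ring
      rcases le_or_gt a c' with h1 | h1
      · rcases le_or_gt b c' with h2 | h2
        · -- a ≤ b ≤ c' : impossible
          obtain ⟨t, i, j, ht, hA, hB, hC⟩ := ih a b c' (by omega) h2a hab h2 heq'
          exfalso
          rcases le_or_gt i j with hij | hij
          · have hmul := vs_mul t i (j - i)
            rw [show i + (j - i) = j from by omega,
                show 2*i + (j - i) = i + j from by omega] at hmul
            have hcv : c = vs t (j - i) := by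
              rw [hcval, hA, hB, hC]; linear_combination hmul
            have hmono : vs t (j - i) ≤ vs t (i + j) := vs_mono (by linarith) (by omega)
            rw [← hC] at hmono
            rw [← hcv] at hmono
            linarith
          · have hmul := vs_mul t j (i - j)
            rw [show j + (i - j) = i from by omega,
                show 2*j + (i - j) = i + j from by omega] at hmul
            have hcv : c = vs t (i - j) := by
              rw [hcval, hA, hB, hC]; linear_combination hmul
            have hmono : vs t (i - j) ≤ vs t (i + j) := vs_mono (by linarith) (by omega)
            rw [← hC] at hmono
            rw [← hcv] at hmono
            linarith
        · -- a ≤ c' < b : sorted (a, c', b)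
          obtain ⟨t, i, j, ht, hA, hB, hC⟩ := ih a c' b (by omega) h2a h1 h2.le
            (by linear_combination heq')
          refine ⟨t, i, i + j, ht, hA, hC, ?_⟩
          have hmul := vs_mul t i j
          rw [show i + (i + j) = 2*i + j from by omega, hcval, hA, hC, hB]
          linear_combination hmul
      · -- c' < a : sorted (c', a, b)
        obtain ⟨t, i, j, ht, hA, hB, hC⟩ := ih c' a b (by omega) hc2 h1.le hab
          (by linear_combination heq')
        refine ⟨t, j, i + j, ht, hB, hC, ?_⟩
        have hmul := vs_mul t j i
        rw [show j + (i + j) = 2*j + i from by omega, hcval, hB, hC, hA,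
          show i + j = j + i from by omega]
        linear_combination hmul

end Stmt16Aux

open Stmt16Aux in
theorem stmt16 (m : ℕ) (hm : 0 < m) (p q : ℕ) (hp : p.Prime) (hq : q.Prime)
    (hpq : p < q)
    (h : (p : ℤ) ^ 2 + (q : ℤ) ^ 2 + ((lucas (2 * m) : ℤ) ^ 2 - 4) =
      (lucas (2 * m) : ℤ) * p * q) :
    (∃ k : ℕ, p = lucas (2 * k) ∧ q = lucas (2 * k + 2 * m)) ∨
    (∃ k : ℕ, k ≤ m ∧ 2 * k ≠ m ∧
      ({p, q} : Set ℕ) = {lucas (2 * k), lucas (2 * m - 2 * k)}) := by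
  have hm1 : 1 ≤ m := hm
  have hluc : ∀ n : ℕ, (lucas (2*n) : ℤ) = vs 3 n := lucas_v3
  have hMv : (lucas (2 * m) : ℤ) = vs 3 m := lucas_v3 m
  have hM3 : (3:ℤ) ≤ (lucas (2 * m) : ℤ) := by
    rw [hMv]
    have := vs_mono (t := 3) (by norm_num) (show 1 ≤ m from hm1)
    simpa using this
  have hp2 : (2:ℤ) ≤ (p:ℤ) := by exact_mod_cast hp.two_le
  have hq2 : (2:ℤ) ≤ (q:ℤ) := by exact_mod_cast hq.two_le
  have hpqZ : (p:ℤ) < (q:ℤ) := by exact_mod_cast hpq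
  set M : ℤ := (lucas (2*m) : ℤ) with hMdef
  rcases le_or_gt M (p:ℤ) with hMp | hMp
  · -- sorted (M, p, q)
    obtain ⟨t, i, j, ht, hA, hB, hC⟩ := classify (M + p + q).toNat M (p:ℤ) (q:ℤ) le_rfl
      (by linarith) hMp (le_of_lt hpqZ) (by linear_combination h)
    obtain ⟨s, hts, hsk⟩ := key hm1 ht (hA.symm.trans hMv)
    have hP : (p:ℤ) = vs 3 (s*j) := by rw [hB, hts, vs_compose]
    have hQ : (q:ℤ) = vs 3 (s*(i+j)) := by rw [hC, hts, vs_compose]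
    have hp' : p = lucas (2*(s*j)) := by exact_mod_cast hP.trans (hluc (s*j)).symm
    have e : s*(i+j) = m + s*j := by rw [Nat.left_distrib, hsk]
    have hq' : q = lucas (2*(s*j) + 2*m) := by
      have h1 : (q:ℤ) = (lucas (2*(m + s*j)) : ℤ) := by rw [hQ, e, hluc]
      have e2 : 2*(m + s*j) = 2*(s*j) + 2*m := by ring
      rw [e2] at h1
      exact_mod_cast h1
    exact Or.inl ⟨s*j, hp', hq'⟩
  · rcases le_or_gt M (q:ℤ) with hMq | hMq
    · -- sorted (p, M, q)
      obtain ⟨t, i, j, ht, hA, hB, hC⟩ := classify ((p:ℤ) + M + q).toNat (p:ℤ) M (q:ℤ) le_rfl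
        hp2 (le_of_lt hMp) hMq (by linear_combination h)
      obtain ⟨s, hts, hsk⟩ := key hm1 ht (hB.symm.trans hMv)
      have hP : (p:ℤ) = vs 3 (s*i) := by rw [hA, hts, vs_compose]
      have hQ : (q:ℤ) = vs 3 (s*(i+j)) := by rw [hC, hts, vs_compose]
      have hp' : p = lucas (2*(s*i)) := by exact_mod_cast hP.trans (hluc (s*i)).symm
      have e : s*(i+j) = s*i + m := by rw [Nat.left_distrib, hsk]
      have hq' : q = lucas (2*(s*i) + 2*m) := by
        have h1 : (q:ℤ) = (lucas (2*(s*i + m)) : ℤ) := by rw [hQ, e, hluc]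
        have e2 : 2*(s*i + m) = 2*(s*i) + 2*m := by ring
        rw [e2] at h1
        exact_mod_cast h1
      exact Or.inl ⟨s*i, hp', hq'⟩
    · -- sorted (p, q, M)
      obtain ⟨t, i, j, ht, hA, hB, hC⟩ := classify ((p:ℤ) + q + M).toNat (p:ℤ) (q:ℤ) M le_rfl
        hp2 (le_of_lt hpqZ) (le_of_lt hMq) (by linear_combination h)
      obtain ⟨s, hts, hsk⟩ := key hm1 ht (hC.symm.trans hMv)
      have hP : (p:ℤ) = vs 3 (s*i) := by rw [hA, hts, vs_compose]
      have hQ : (q:ℤ) = vs 3 (s*j) := by rw [hB, hts, vs_compose]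
      have hp' : p = lucas (2*(s*i)) := by exact_mod_cast hP.trans (hluc (s*i)).symm
      have hq' : q = lucas (2*(s*j)) := by exact_mod_cast hQ.trans (hluc (s*j)).symm
      have hm' : s*i + s*j = m := by rw [← Nat.left_distrib]; exact hsk
      obtain ⟨si, hsi⟩ : ∃ x, x = s * i := ⟨_, rfl⟩
      obtain ⟨sj, hsj⟩ : ∃ x, x = s * j := ⟨_, rfl⟩
      rw [← hsi] at hm' hp'
      rw [← hsj] at hm' hq'
      right
      refine ⟨si, by omega, ?_, ?_⟩
      · intro hcon
        have hij : si = sj := by omega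
        rw [hij] at hp'
        exact absurd (hp'.trans hq'.symm) (by omega)
      · have e2 : 2*m - 2*si = 2*sj := by omega
        rw [hp', hq', e2]
end

section
/- Let A and k be positive integers with A ≠ 2 or k odd. Then the equation σ₂(n) − n² = A·n + (k² + 1) has only finitely many positive integer solutions n. -/
theorem stmt17 (A k : ℕ) (hA : 0 < A) (hk : 0 < k) (h : A ≠ 2 ∨ Odd k) :
    {n : ℕ | 0 < n ∧
      (ArithmeticFunction.sigma 2 n : ℤ) - (n : ℤ) ^ 2 = A * n + (k ^ 2 + 1)}.Finite := by
  set C := A*A*A + (k+1)*(k*k+1) + A*(k*k) + 2*k + 4 + k*k with hC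
  clear_value C
  apply Set.Finite.subset (Set.finite_Icc 1 C)
  rintro n ⟨hn0, heq⟩
  simp only [Set.mem_Icc]
  refine ⟨hn0, ?_⟩
  have hσ : (ArithmeticFunction.sigma 2 n : ℕ) = n^2 + ∑ d ∈ n.properDivisors, d^2 := by
    rw [ArithmeticFunction.sigma_apply, ← Nat.insert_self_properDivisors hn0.ne',
      Finset.sum_insert Nat.self_notMem_properDivisors]
  set S := ∑ d ∈ n.properDivisors, d^2 with hSdef
  clear_value S
  have hS : S = A * n + (k^2 + 1) := by
    have hZ : (S : ℤ) = A*n + (k^2+1) := by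
      rw [hσ] at heq; push_cast at heq ⊢; linarith
    exact_mod_cast hZ
  have hCk : 2*k + 4 ≤ C := by
    rw [hC]; linarith [Nat.zero_le (A*A*A), Nat.zero_le ((k+1)*(k*k+1)), Nat.zero_le (A*(k*k)), Nat.zero_le (k*k)]
  clear heq hσ
  by_cases hn1 : n = 1
  · omega
  set p := n.minFac with hpdef
  have hp : p.Prime := Nat.minFac_prime hn1
  have hpd : p ∣ n := Nat.minFac_dvd n
  set m := n / p with hmdef
  have hnm : p * m = n := Nat.mul_div_cancel' hpd
  have hm0 : 0 < m := Nat.div_pos (Nat.minFac_le hn0) (Nat.minFac_pos n)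
  clear_value p m
  by_cases hm1 : m = 1
  · -- n is prime
    exfalso
    have hn : n = p := by rw [← hnm, hm1, mul_one]
    rw [hn, hp.properDivisors] at hSdef
    simp at hSdef
    have hk2 : 1 ≤ k^2 := Nat.one_le_pow 2 k hk
    have hAn : 1 ≤ A * n := Nat.one_le_iff_ne_zero.mpr (by positivity)
    linarith
  have hm2 : 2 ≤ m := by omega
  by_cases hmp : m = p
  · -- n = p^2
    exfalso
    have hn : n = p^2 := by rw [← hnm, hmp, sq]
    have hpdiv : n.properDivisors = {1, p} := by
      ext d
      rw [hn, Nat.mem_properDivisors_prime_pow hp]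
      constructor
      · rintro ⟨j, hj, rfl⟩
        interval_cases j <;> simp
      · intro hd
        rcases Finset.mem_insert.mp hd with rfl | hd
        · exact ⟨0, by omega, by simp⟩
        · rw [Finset.mem_singleton] at hd; exact ⟨1, by omega, by simp [hd]⟩
    rw [hpdiv] at hSdef
    rw [Finset.sum_insert (by simp [hp.one_lt.ne]), Finset.sum_singleton] at hSdef
    have hk2 : 1 ≤ k^2 := Nat.one_le_pow 2 k hk
    have hp2 : p^2 ≤ A * n := by
      rw [hn]; nlinarith [hp.two_le]
    linarith
  by_cases hmprime : m.Prime
  · -- n = p * m with p < m primes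
    have hmdvd : m ∣ n := ⟨p, by rw [← hnm, mul_comm]⟩
    have hplem : p ≤ m := hpdef ▸ Nat.minFac_le_of_dvd hmprime.two_le hmdvd
    have hpltm : p < m := lt_of_le_of_ne hplem (Ne.symm hmp)
    have hpdiv : n.properDivisors = {1, p, m} := by
      ext d
      rw [Nat.mem_properDivisors]
      constructor
      · rintro ⟨hdvd, hlt⟩
        rw [← hnm] at hdvd hlt
        by_cases hpd' : p ∣ d
        · obtain ⟨e, rfl⟩ := hpd'
          have he : e ∣ m := (mul_dvd_mul_iff_left hp.pos.ne').mp hdvd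
          rcases hmprime.eq_one_or_self_of_dvd e he with rfl | rfl
          · simp
          · exact absurd hlt (lt_irrefl _)
        · have hcop : Nat.Coprime p d := (Nat.Prime.coprime_iff_not_dvd hp).mpr hpd'
          have hdm : d ∣ m := (Nat.Coprime.dvd_of_dvd_mul_left hcop.symm hdvd)
          rcases hmprime.eq_one_or_self_of_dvd d hdm with rfl | rfl
          · simp
          · simp
      · intro hd
        have h1n : 1 < n := by omega
        rcases Finset.mem_insert.mp hd with rfl | hd
        · exact ⟨one_dvd n, h1n⟩
        rcases Finset.mem_insert.mp hd with rfl | hd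
        · refine ⟨hpd, ?_⟩
          rw [← hnm]
          exact (lt_mul_iff_one_lt_right hp.pos).mpr hmprime.one_lt
        · rw [Finset.mem_singleton] at hd; subst hd
          refine ⟨hmdvd, ?_⟩
          rw [← hnm]
          exact (lt_mul_iff_one_lt_left hm0).mpr hp.one_lt
    have h1p : (1 : ℕ) ≠ p := hp.one_lt.ne
    have h1m : (1 : ℕ) ≠ m := hmprime.one_lt.ne
    rw [hpdiv, Finset.sum_insert (by simp [h1p, h1m]),
      Finset.sum_insert (by simpa using Ne.symm hmp), Finset.sum_singleton] at hSdef
    have key : 1 + p^2 + m^2 = A * (p*m) + k^2 + 1 := by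
      rw [hnm]; linarith [hSdef.symm.trans hS]
    by_cases hmk : m ≤ k
    · -- n ≤ k*k
      have : n ≤ k * k := by rw [← hnm]; exact Nat.mul_le_mul (by omega) hmk
      rw [hC]; linarith [Nat.zero_le (A*A*A), Nat.zero_le ((k+1)*(k*k+1)), Nat.zero_le (A*(k*k))]
    have hkm : k < m := by omega
    have keyZ : (p:ℤ)^2 + (m:ℤ)^2 = (A:ℤ)*((p:ℤ)*(m:ℤ)) + (k:ℤ)^2 := by
      have h' : ((1 + p^2 + m^2 : ℕ) : ℤ) = ((A*(p*m) + k^2 + 1 : ℕ) : ℤ) := by exact_mod_cast key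
      push_cast at h'
      linarith
    have hZdvd : (m:ℤ) ∣ ((k:ℤ) - p) * ((k:ℤ) + p) := by
      refine ⟨(m:ℤ) - A*p, ?_⟩
      linear_combination -keyZ
    have hmZ : Prime (m:ℤ) := Nat.prime_iff_prime_int.mp hmprime
    rcases hmZ.dvd_mul.mp hZdvd with hd | hd
    · -- m ∣ k - p
      by_cases hkp : k = p
      · -- m = A*p, n = A*k*k
        have key' := key
        rw [hkp] at key'
        have hm_eq : m * m = A * p * m := by
          have e1 : m^2 = m*m := sq m
          have e2 : p^2 = p*p := sq p
          have e3 : A*(p*m) = A*p*m := by ring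
          linarith
        have hmA : m = A * p := Nat.eq_of_mul_eq_mul_right hm0 hm_eq
        have hn' : n = A * (k*k) := by rw [← hnm, hmA, hkp]; ring
        rw [hC]; linarith [Nat.zero_le (A*A*A), Nat.zero_le ((k+1)*(k*k+1)), Nat.zero_le (k*k)]
      · exfalso
        have hne : (k:ℤ) - p ≠ 0 := by
          intro h0
          exact hkp (by exact_mod_cast sub_eq_zero.mp h0)
        have h1 : (m:ℤ) ≤ |(k:ℤ) - p| := Int.le_of_dvd (abs_pos.mpr hne) ((dvd_abs _ _).mpr hd)
        have h2 : |(k:ℤ) - p| < m := by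
          rw [abs_lt]
          constructor <;> omega
        linarith
    · -- m ∣ k + p
      have hdn : m ∣ k + p := by exact_mod_cast hd
      have hsum : k + p = m := by
        obtain ⟨c, hc⟩ := hdn
        have hc0 : 0 < c := by
          rcases Nat.eq_zero_or_pos c with rfl | h0
          · omega
          · exact h0
        have hc2 : c < 2 := by
          by_contra hge
          push_neg at hge
          have h2c : m * 2 ≤ m * c := Nat.mul_le_mul_left m hge
          linarith
        have hc1 : c = 1 := by omega
        rw [hc1, mul_one] at hc
        omega
      have hpm0 : (0:ℤ) < (p:ℤ) * m :=
        mul_pos (by exact_mod_cast hp.pos) (by exact_mod_cast hm0)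
      have hA2 : A = 2 := by
        have hmul : (A:ℤ) * ((p:ℤ)*m) = 2 * ((p:ℤ)*m) := by
          have hkZ : (k:ℤ) = (m:ℤ) - p := by omega
          rw [hkZ] at keyZ
          linear_combination -keyZ
        have : (A:ℤ) = 2 := mul_right_cancel₀ hpm0.ne' hmul
        exact_mod_cast this
      rcases h with hA' | hkodd
      · exact (hA' hA2).elim
      · have hp2 : p = 2 := by
          by_contra hp2
          have hpo : Odd p := hp.odd_of_ne_two hp2
          have hmo : Odd m := hmprime.odd_of_ne_two (by have := hp.two_le; omega)
          obtain ⟨a, ha⟩ := hkodd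
          obtain ⟨b, hb⟩ := hpo
          obtain ⟨c, hc⟩ := hmo
          omega
        have hn' : n = 2*k + 4 := by rw [← hnm, hp2]; omega
        linarith
  · -- m composite
    set q := m.minFac with hqdef
    have hq : q.Prime := Nat.minFac_prime (by omega)
    have hqm : q ∣ m := Nat.minFac_dvd m
    set r := m / q with hrdef
    have hqr : q * r = m := Nat.mul_div_cancel' hqm
    have hr0 : 0 < r := Nat.div_pos (Nat.minFac_le hm0) (Nat.minFac_pos m)
    have hr1 : r ≠ 1 := by
      intro h1
      exact hmprime (by rw [← hqr, h1, mul_one]; exact hq)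
    have hr2 : 2 ≤ r := by omega
    have hrm : r ∣ m := ⟨q, by rw [← hqr, mul_comm]⟩
    have hqler : q ≤ r := by
      have h1 : m.minFac ≤ r.minFac :=
        Nat.minFac_le_of_dvd (Nat.minFac_prime hr1).two_le ((Nat.minFac_dvd r).trans hrm)
      exact h1.trans (Nat.minFac_le hr0)
    have hmdvdn : m ∣ n := ⟨p, by rw [← hnm, mul_comm]⟩
    have hpleq : p ≤ q := hpdef ▸ Nat.minFac_le_of_dvd hq.two_le (hqm.trans hmdvdn)
    have hppm : p * p ≤ m := by
      calc p * p ≤ q * r := Nat.mul_le_mul hpleq (hpleq.trans hqler)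
      _ = m := hqr
    have hmltn : m < n := by
      rw [← hnm]; exact (lt_mul_iff_one_lt_left hm0).mpr hp.one_lt
    have hmmem : m ∈ n.properDivisors := Nat.mem_properDivisors.mpr ⟨hmdvdn, hmltn⟩
    have hSm : m^2 ≤ S := by
      rw [hSdef]
      exact Finset.single_le_sum (f := fun d => d^2) (fun i _ => Nat.zero_le _) hmmem
    have hbound : m * m ≤ A * p * m + k * k + 1 := by
      have h0 : m^2 ≤ A * n + (k^2 + 1) := hS ▸ hSm
      rw [← hnm] at h0
      have e1 : m^2 = m*m := sq m
      have e2 : k^2 = k*k := sq k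
      have e3 : A*(p*m) = A*p*m := by ring
      linarith
    by_cases hmap : m ≤ A * p
    · have hpA : p ≤ A := Nat.le_of_mul_le_mul_right (hppm.trans hmap) hp.pos
      have hmAA : m ≤ A * A := hmap.trans (Nat.mul_le_mul_left A hpA)
      have hn' : n ≤ A*A*A := by
        rw [← hnm]
        calc p * m ≤ A * (A * A) := Nat.mul_le_mul hpA hmAA
        _ = A*A*A := by ring
      rw [hC]; linarith [Nat.zero_le ((k+1)*(k*k+1)), Nat.zero_le (A*(k*k)), Nat.zero_le (k*k)]
    · push_neg at hmap
      have hm' : m ≤ k*k + 1 := by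
        have h1 : m*(A*p+1) ≤ m*m := Nat.mul_le_mul_left m (by omega)
        have e : m*(A*p+1) = A*p*m + m := by ring
        linarith
      have hpk : p ≤ k + 1 := by
        by_contra hgt
        push_neg at hgt
        have h1 : (k+2)*(k+2) ≤ p*p := Nat.mul_le_mul (by omega) (by omega)
        have e : (k+2)*(k+2) = k*k + 4*k + 4 := by ring
        linarith
      have hn' : n ≤ (k+1)*(k*k+1) := by rw [← hnm]; exact Nat.mul_le_mul hpk hm'
      rw [hC]; linarith [Nat.zero_le (A*A*A), Nat.zero_le (A*(k*k)), Nat.zero_le (k*k)]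
end

section
/- Let k be a positive even integer. If n > (k² + 3)³ is a positive integer satisfying σ₂(n) − n² = 2·n + (k² + 1), then n = p·(p + k) where both p and p + k are prime. Conversely, for any prime p with p + k prime, n = p(p+k) is a solution. -/
private lemma amgmAux (a b : ℕ) : 2 * (a * b) ≤ a ^ 2 + b ^ 2 := by
  rcases le_total a b with h | h <;>
  · obtain ⟨c, rfl⟩ := Nat.le.dest h
    ring_nf; nlinarith

private lemma divMemAux (n : ℕ) (hn : 0 < n) {d : ℕ} (hdvd : d ∣ n) (h1 : d ≠ 1)
    (hne : d ≠ n) : n / d ∣ n ∧ n / d ≠ 1 ∧ n / d ≠ n := by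
  have hmul : d * (n / d) = n := Nat.mul_div_cancel' hdvd
  refine ⟨Nat.div_dvd_of_dvd hdvd, ?_, ?_⟩
  · intro h; rw [h, mul_one] at hmul; exact hne hmul
  · intro h; rw [h] at hmul
    exact h1 (by nlinarith [hmul])

private lemma sumLbAux (n : ℕ) (hn : 0 < n) (D : Finset ℕ)
    (hD : ∀ d, d ∈ D ↔ d ∣ n ∧ d ≠ 1 ∧ d ≠ n) :
    D.card * n ≤ ∑ d ∈ D, d ^ 2 := by
  have key : ∀ d ∈ D, n / d ∈ D := by
    intro d hd
    obtain ⟨hdvd, h1, hne⟩ := (hD d).mp hd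
    exact (hD _).mpr (divMemAux n hn hdvd h1 hne)
  have hsymm : ∑ d ∈ D, (n / d) ^ 2 = ∑ d ∈ D, d ^ 2 := by
    refine Finset.sum_nbij' (fun d => n / d) (fun d => n / d) key key ?_ ?_ ?_ <;>
      intro d hd
    · exact Nat.div_div_self ((hD d).mp hd).1 hn.ne'
    · exact Nat.div_div_self ((hD d).mp hd).1 hn.ne'
    · rfl
  have h2 : 2 * (D.card * n) ≤ 2 * ∑ d ∈ D, d ^ 2 := by
    calc 2 * (D.card * n) = ∑ _d ∈ D, 2 * n := by
          rw [Finset.sum_const, smul_eq_mul]; ring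
      _ ≤ ∑ d ∈ D, (d ^ 2 + (n / d) ^ 2) := by
          refine Finset.sum_le_sum fun d hd => ?_
          have hmul : d * (n / d) = n := Nat.mul_div_cancel' ((hD d).mp hd).1
          calc 2 * n = 2 * (d * (n / d)) := by rw [hmul]
            _ ≤ _ := amgmAux _ _
      _ = 2 * ∑ d ∈ D, d ^ 2 := by
          rw [Finset.sum_add_distrib, hsymm, two_mul]
  omega

set_option maxHeartbeats 1000000 in
private lemma mainAux (k n a b : ℕ) (hk : 0 < k) (hn : (k ^ 2 + 3) ^ 3 < n)
    (hab : a < b)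
    (hD : ∀ d, d ∣ n → d ≠ 1 → d ≠ n → d = a ∨ d = b)
    (ha1 : a ≠ 1)
    (hn_eq : n = a * b)
    (hsum : a ^ 2 + b ^ 2 = 2 * n + k ^ 2) :
    a.Prime ∧ (a + k).Prime ∧ n = a * (a + k) := by
  have hn0 : 0 < n := lt_of_le_of_lt (Nat.zero_le _) hn
  have ha0 : 0 < a := by
    rcases Nat.eq_zero_or_pos a with h | h
    · rw [h, zero_mul] at hn_eq; omega
    · exact h
  have ha2 : 2 ≤ a := by omega
  have hb2 : 2 ≤ b := by omega
  have haDvd : a ∣ n := ⟨b, hn_eq⟩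
  have hbDvd : b ∣ n := ⟨a, by rw [hn_eq, mul_comm]⟩
  have haLt : a < n := by
    have : a < a * b := (Nat.lt_mul_iff_one_lt_right ha0).mpr (by omega)
    omega
  have hbLt : b < n := by
    have : b < a * b := by
      calc b = 1 * b := (one_mul b).symm
        _ < a * b := Nat.mul_lt_mul_of_lt_of_le (by omega) (le_refl b) (by omega)
    omega
  -- b = a + k
  have hbk : b = a + k := by
    have hsZ : (a : ℤ) ^ 2 + (b : ℤ) ^ 2 = 2 * ((a : ℤ) * b) + (k : ℤ) ^ 2 := by
      have := hsum
      rw [hn_eq] at this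
      exact_mod_cast this
    have hz : ((b : ℤ) - a - k) * ((b : ℤ) - a + k) = 0 := by linear_combination hsZ
    rcases mul_eq_zero.mp hz with h | h
    · have : (b : ℤ) = a + k := by linarith
      exact_mod_cast this
    · have habZ : (a : ℤ) < b := by exact_mod_cast hab
      have hkZ : (0 : ℤ) < k := by exact_mod_cast hk
      linarith
  -- a is prime
  have haP : a.Prime := by
    have hq : a.minFac.Prime := Nat.minFac_prime ha1
    have hqn : a.minFac ∣ n := (Nat.minFac_dvd a).trans haDvd
    have hqle : a.minFac ≤ a := Nat.minFac_le ha0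
    rcases hD _ hqn hq.one_lt.ne' (by omega) with h | h
    · exact Nat.prime_def_minFac.mpr ⟨ha2, h⟩
    · omega
  -- b is prime
  have hbP : b.Prime := by
    have hb1 : b ≠ 1 := by omega
    have hq : b.minFac.Prime := Nat.minFac_prime hb1
    have hqn : b.minFac ∣ n := (Nat.minFac_dvd b).trans hbDvd
    have hqle : b.minFac ≤ b := Nat.minFac_le (by omega)
    rcases hD _ hqn hq.one_lt.ne' (by omega) with h | h
    · -- a ∣ b, derive contradiction with size
      exfalso
      have hadb : a ∣ b := h ▸ Nat.minFac_dvd b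
      have hc : a * a ∣ n := by
        obtain ⟨t, rfl⟩ := hadb
        exact ⟨t, by rw [hn_eq]; ring⟩
      have hc1 : a * a ≠ 1 := by
        intro hcc
        have : 2 * 2 ≤ a * a := Nat.mul_le_mul ha2 ha2
        omega
      have hcn : a * a ≠ n := by
        intro hcc
        rw [hn_eq] at hcc
        exact absurd (Nat.eq_of_mul_eq_mul_left ha0 hcc) hab.ne
      rcases hD _ hc hc1 hcn with h2 | h2
      · exact ha1 (Nat.eq_of_mul_eq_mul_left ha0 (by rw [h2, mul_one]))
      · -- b = a^2, so n = a^3 and k = a^2 - a ≥ a, contradicting size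
        have hkval : k = a * a - a := by omega
        have haa : a + a ≤ a * a := Nat.add_le_mul ha2 ha2
        have hak : a ≤ k := by omega
        have hak2 : a ≤ k ^ 2 + 3 :=
          le_trans hak (le_trans (Nat.le_self_pow two_ne_zero k) (Nat.le_add_right _ 3))
        have hcube : a ^ 3 ≤ (k ^ 2 + 3) ^ 3 := Nat.pow_le_pow_left hak2 3
        have hneq : n = a ^ 3 := by rw [hn_eq, ← h2]; ring
        linarith
    · exact Nat.prime_def_minFac.mpr ⟨hb2, h⟩
  exact ⟨haP, hbk ▸ hbP, hbk ▸ hn_eq⟩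

set_option maxHeartbeats 1000000 in
theorem stmt18 (k : ℕ) (hk : 0 < k) (hke : Even k) :
    (∀ n : ℕ, (n : ℤ) > ((k : ℤ) ^ 2 + 3) ^ 3 →
      (ArithmeticFunction.sigma 2 n : ℤ) - (n : ℤ) ^ 2 = 2 * n + ((k : ℤ) ^ 2 + 1) →
      ∃ p : ℕ, p.Prime ∧ (p + k).Prime ∧ n = p * (p + k)) ∧
    (∀ p : ℕ, p.Prime → (p + k).Prime →
      (ArithmeticFunction.sigma 2 (p * (p + k)) : ℤ) - ((p * (p + k) : ℕ) : ℤ) ^ 2 =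
        2 * (p * (p + k) : ℕ) + ((k : ℤ) ^ 2 + 1)) := by
  constructor
  · -- hard direction
    intro n hn hEq
    have hnn : (k ^ 2 + 3) ^ 3 < n := by
      have : (((k ^ 2 + 3) ^ 3 : ℕ) : ℤ) < (n : ℤ) := by push_cast; linarith
      exact_mod_cast this
    have hn0 : 0 < n := lt_of_le_of_lt (Nat.zero_le _) hnn
    have hk2n : k ^ 2 + 3 ≤ n := le_trans (Nat.le_self_pow (by norm_num) _) hnn.le
    have hn1 : 1 < n := by omega
    have hσ : ArithmeticFunction.sigma 2 n = n ^ 2 + 2 * n + (k ^ 2 + 1) := by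
      have : (ArithmeticFunction.sigma 2 n : ℤ) =
          (n : ℤ) ^ 2 + 2 * n + ((k : ℤ) ^ 2 + 1) := by linarith
      exact_mod_cast this
    set D := (n.divisors.erase 1).erase n with hDdef
    have hDmem : ∀ d, d ∈ D ↔ d ∣ n ∧ d ≠ 1 ∧ d ≠ n := by
      intro d
      simp only [hDdef, Finset.mem_erase, Nat.mem_divisors, hn0.ne', and_true,
        ne_eq, not_false_eq_true]
      tauto
    have hnD : n ∉ D := Finset.notMem_erase _ _
    have h1D : 1 ∉ Insert.insert n D := by
      simp only [Finset.mem_insert]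
      push_neg
      exact ⟨hn1.ne, fun h => ((hDmem 1).mp h).2.1 rfl⟩
    have hsplit : ArithmeticFunction.sigma 2 n = 1 + (n ^ 2 + ∑ d ∈ D, d ^ 2) := by
      have h1mem : (1 : ℕ) ∈ n.divisors := Nat.one_mem_divisors.mpr hn0.ne'
      have hnmem : n ∈ n.divisors.erase 1 :=
        Finset.mem_erase.mpr ⟨hn1.ne', Nat.mem_divisors_self n hn0.ne'⟩
      have e1 : n.divisors = insert 1 (insert n D) := by
        rw [hDdef, Finset.insert_erase hnmem, Finset.insert_erase h1mem]
      rw [ArithmeticFunction.sigma_apply, e1, Finset.sum_insert h1D,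
        Finset.sum_insert hnD, one_pow]
    have hS : ∑ d ∈ D, d ^ 2 = 2 * n + k ^ 2 := by omega
    have hlb := sumLbAux n hn0 D hDmem
    have hcard : D.card ≤ 2 := by
      by_contra hc
      push_neg at hc
      have : 3 * n ≤ D.card * n := Nat.mul_le_mul_right n hc
      omega
    interval_cases hc : D.card
    · rw [Finset.card_eq_zero.mp hc, Finset.sum_empty] at hS
      omega
    · obtain ⟨a, hEqa⟩ := Finset.card_eq_one.mp hc
      have haD : a ∈ D := hEqa ▸ Finset.mem_singleton_self a
      obtain ⟨haDvd, ha1, han⟩ := (hDmem a).mp haD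
      have hdivD : n / a ∈ D := (hDmem _).mpr (divMemAux n hn0 haDvd ha1 han)
      have : n / a = a := by
        rw [hEqa] at hdivD; exact Finset.mem_singleton.mp hdivD
      have hna : a * a = n := by
        have h' := Nat.mul_div_cancel' haDvd
        rw [this] at h'; exact h'
      rw [hEqa, Finset.sum_singleton] at hS
      have : a ^ 2 = a * a := sq a
      omega
    · obtain ⟨a, b, hab, hEqab⟩ := Finset.card_eq_two.mp hc
      have haD : a ∈ D := by rw [hEqab]; exact Finset.mem_insert_self a _
      have hbD : b ∈ D := by rw [hEqab]; simp
      obtain ⟨haDvd, ha1, han⟩ := (hDmem a).mp haD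
      obtain ⟨hbDvd, hb1, hbn⟩ := (hDmem b).mp hbD
      rw [hEqab, Finset.sum_pair hab] at hS
      have hdivD : n / a ∈ D := (hDmem _).mpr (divMemAux n hn0 haDvd ha1 han)
      rw [hEqab, Finset.mem_insert, Finset.mem_singleton] at hdivD
      have hDpred : ∀ d, d ∣ n → d ≠ 1 → d ≠ n → d = a ∨ d = b := by
        intro d h1 h2 h3
        have : d ∈ D := (hDmem d).mpr ⟨h1, h2, h3⟩
        rw [hEqab, Finset.mem_insert, Finset.mem_singleton] at this
        exact this
      rcases hdivD with h | h
      · -- n / a = a, so n = a^2; derive contradiction via n / b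
        exfalso
        have hna : a * a = n := by
          have h' := Nat.mul_div_cancel' haDvd
          rw [h] at h'; exact h'
        have hdivbD : n / b ∈ D := (hDmem _).mpr (divMemAux n hn0 hbDvd hb1 hbn)
        rw [hEqab, Finset.mem_insert, Finset.mem_singleton] at hdivbD
        have hnb : b * (n / b) = n := Nat.mul_div_cancel' hbDvd
        have hb0 : 0 < b := by
          rcases Nat.eq_zero_or_pos b with h0 | h0
          · exfalso; rw [h0] at hbDvd; have := Nat.eq_zero_of_zero_dvd hbDvd; omega
          · exact h0
        rcases hdivbD with h2 | h2
        · rw [h2] at hnb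
          have : b * a = a * a := by rw [hnb, hna]
          have ha0 : 0 < a := by
            rcases Nat.eq_zero_or_pos a with h0 | h0
            · exfalso; rw [h0, zero_mul] at hna; omega
            · exact h0
          exact hab (Nat.eq_of_mul_eq_mul_right ha0 this).symm
        · rw [h2] at hnb
          have : b * b = a * a := by rw [hnb, hna]
          exact hab (Nat.mul_self_inj.mp this).symm
      · -- n = a * b
        have hnab : n = a * b := by
          have h' := Nat.mul_div_cancel' haDvd
          rw [h] at h'; exact h'.symm
        rcases lt_or_gt_of_ne hab with hlt | hgt
        · exact ⟨a, mainAux k n a b hk hnn hlt hDpred ha1 hnab hS⟩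
        · exact ⟨b, mainAux k n b a hk hnn hgt
            (fun d hd1 hd2 hd3 => (hDpred d hd1 hd2 hd3).symm) hb1
            (by rw [hnab, mul_comm]) (by omega)⟩
  · -- easy direction
    intro p hp hq
    have hne : p ≠ p + k := by omega
    have hco : Nat.Coprime p (p + k) := (Nat.coprime_primes hp hq).mpr hne
    have hmul : (ArithmeticFunction.sigma 2 (p * (p + k)) : ℤ) =
        (1 + (p : ℤ) ^ 2) * (1 + ((p : ℤ) + k) ^ 2) := by
      rw [ArithmeticFunction.isMultiplicative_sigma.map_mul_of_coprime hco]
      have h1 : ArithmeticFunction.sigma 2 p = 1 + p ^ 2 := by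
        rw [ArithmeticFunction.sigma_apply, hp.divisors, Finset.sum_pair hp.one_lt.ne,
          one_pow]
      have h2 : ArithmeticFunction.sigma 2 (p + k) = 1 + (p + k) ^ 2 := by
        rw [ArithmeticFunction.sigma_apply, hq.divisors, Finset.sum_pair hq.one_lt.ne,
          one_pow]
      rw [h1, h2]; push_cast; ring
    rw [hmul]; push_cast; ring
end

section
/- Let A and k be positive integers and let p < q be primes satisfying p² + q² − k² = A·p·q with p·q > (A + k² + 1)³. Then p > k, q = p + k, and A = 2. -/
set_option maxHeartbeats 1600000 in
theorem stmt19 (A k p q : ℕ) (hA : 0 < A) (hk : 0 < k)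
    (hp : p.Prime) (hq : q.Prime) (hpq : p < q)
    (h : (p : ℤ) ^ 2 + (q : ℤ) ^ 2 - (k : ℤ) ^ 2 = A * p * q)
    (hn : p * q > (A + k ^ 2 + 1) ^ 3) :
    k < p ∧ q = p + k ∧ A = 2 := by
  have hp2 := hp.two_le
  have hq2 := hq.two_le
  have hpZ : (0:ℤ) < p := by exact_mod_cast hp.pos
  have hqZ : (0:ℤ) < q := by exact_mod_cast hq.pos
  have hpqZ : (p:ℤ) < q := by exact_mod_cast hpq
  -- Step 1 : k < p
  have hkp : k < p := by
    by_contra hle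
    push_neg at hle
    rcases eq_or_lt_of_le hle with heq | hlt
    · -- p = k, then q = A p, impossible
      have hk' : (k:ℤ) = p := by exact_mod_cast heq.symm
      have hq' : (q:ℤ) = A * p := by
        have h2 : (q:ℤ) * q = (A*p) * q := by rw [hk'] at h; ring_nf; ring_nf at h; linarith
        exact mul_right_cancel₀ (ne_of_gt hqZ) h2
      have hqn : q = A * p := by exact_mod_cast hq'
      have hdvd : p ∣ q := ⟨A, by rw [hqn, Nat.mul_comm]⟩
      rcases (hq.eq_one_or_self_of_dvd p hdvd) with h1 | h1 <;> omega
    · -- p < k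
      have hdvd : (q:ℤ) ∣ (k:ℤ)^2 - p^2 := ⟨(q:ℤ) - A*p, by linear_combination -h⟩
      have hpos : (0:ℤ) < (k:ℤ)^2 - p^2 := by
        have : (p:ℤ) < k := by exact_mod_cast hlt
        nlinarith
      have hqle : (q:ℤ) ≤ (k:ℤ)^2 - p^2 := Int.le_of_dvd hpos hdvd
      have hqk : q < k^2 := by
        have : (q:ℤ) < (k:ℤ)^2 := by nlinarith
        exact_mod_cast this
      have h1 : p * q < k^2 * k^2 := by
        calc p * q < q * q := by nlinarith
        _ < k^2 * k^2 := Nat.mul_lt_mul'' hqk hqk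
      have h2 : k^2 + 2 ≤ A + k^2 + 1 := by omega
      have h3 : (k^2+2)^3 ≤ (A+k^2+1)^3 := Nat.pow_le_pow_left h2 3
      have h4 : k^2 * k^2 ≤ (k^2+2)^3 := by nlinarith
      omega
  have hkpZ : (k:ℤ) < p := by exact_mod_cast hkp
  have hkZ : (0:ℤ) < k := by exact_mod_cast hk
  -- m = A p - q
  obtain ⟨M, hM⟩ : ∃ M : ℤ, M = (A:ℤ)*p - q := ⟨_, rfl⟩
  have hm : (p:ℤ)^2 - k^2 = q * M := by rw [hM]; linear_combination h
  have hMpos : 0 < M := by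
    by_contra hMle
    push_neg at hMle
    have : (q:ℤ) * M ≤ 0 := mul_nonpos_of_nonneg_of_nonpos (le_of_lt hqZ) hMle
    nlinarith
  have hMlt : M < p := by
    have h1 : (q:ℤ) * M < q * p := by nlinarith
    exact lt_of_mul_lt_mul_left h1 (le_of_lt hqZ)
  have key : M^2 - k^2 = p * ((A:ℤ)*M - p) := by rw [hM]; linear_combination h
  have hpZp : Prime ((p:ℤ)) := Nat.prime_iff_prime_int.mp hp
  have hdvd : (p:ℤ) ∣ (M - k) * (M + k) := ⟨(A:ℤ)*M - p, by linear_combination key⟩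
  rcases hpZp.dvd_mul.mp hdvd with h1 | h2
  · -- p ∣ M - k, so M = k
    obtain ⟨c, hc⟩ := h1
    have hceq : c = 0 := by
      have hcl : (p:ℤ)*c < p*1 := by rw [mul_one]; linarith
      have hcl' : c < 1 := lt_of_mul_lt_mul_left hcl (le_of_lt hpZ)
      have hcg : (p:ℤ)*(-1) < p*c := by nlinarith
      have hcg' : (-1:ℤ) < c := lt_of_mul_lt_mul_left hcg (le_of_lt hpZ)
      omega
    have hMk : M = k := by rw [hceq] at hc; simp at hc; linarith
    have hAk : (A:ℤ)*k = p := by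
      have h0 : (p:ℤ) * ((A:ℤ)*k - p) = 0 := by rw [hMk] at key; linarith
      rcases mul_eq_zero.mp h0 with h' | h'
      · exact absurd h' (ne_of_gt hpZ)
      · linarith
    have hAkn : A * k = p := by exact_mod_cast hAk
    have hkdvd : k ∣ p := ⟨A, by rw [← hAkn, Nat.mul_comm]⟩
    have hk1 : k = 1 := by
      rcases hp.eq_one_or_self_of_dvd k hkdvd with h' | h'
      · exact h'
      · exact absurd h' (by omega)
    have hAp : A = p := by rw [hk1, Nat.mul_one] at hAkn; exact hAkn
    have hqval : q + 1 = p * p := by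
      have : (q:ℤ) + 1 = p * p := by
        rw [hM] at hMk
        have : (A:ℤ) = p := by exact_mod_cast hAp
        rw [this] at hMk
        have hk1' : (k:ℤ) = 1 := by exact_mod_cast hk1
        rw [hk1'] at hMk; linarith
      exact_mod_cast this
    rcases hp.eq_two_or_odd' with hp2' | hodd
    · -- p = 2, q = 3, contradicts hn
      subst hp2'
      have hq3 : q = 3 := by omega
      rw [hq3, hk1, hAp] at hn
      norm_num at hn
    · obtain ⟨n, hn'⟩ := hodd
      have h2q : (q:ℤ) = 2*(2*(n:ℤ)*n+2*n) := by
        have hc1 : ((q:ℤ)+1) = (p:ℤ)*(p:ℤ) := by exact_mod_cast hqval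
        have hc2 : (p:ℤ) = 2*(n:ℤ)+1 := by exact_mod_cast hn'
        rw [hc2] at hc1; linear_combination hc1
      have hqeven : 2 ∣ q := by
        have : (2:ℤ) ∣ (q:ℤ) := ⟨2*(n:ℤ)*n+2*n, h2q⟩
        exact_mod_cast this
      rcases hq.eq_one_or_self_of_dvd 2 hqeven with h' | h'
      · omega
      · omega
  · -- p ∣ M + k, so M + k = p
    obtain ⟨c, hc⟩ := h2
    have hceq : c = 1 := by
      have h2p : (p:ℤ)*c < p*2 := by nlinarith
      have hcl : c < 2 := lt_of_mul_lt_mul_left h2p (le_of_lt hpZ)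
      have h0p : (p:ℤ)*0 < p*c := by nlinarith
      have hcg : (0:ℤ) < c := lt_of_mul_lt_mul_left h0p (le_of_lt hpZ)
      omega
    have hMk : M = (p:ℤ) - k := by rw [hceq] at hc; simp at hc; linarith
    have e : ((p:ℤ)-k)^2 - k^2 = p * ((A:ℤ)*((p:ℤ)-k) - p) := by rw [hMk] at key; exact key
    have hfac : (p:ℤ) * ((p:ℤ)-k) * ((A:ℤ)-2) = 0 := by linear_combination -e
    have hA2 : (A:ℤ) = 2 := by
      rcases mul_eq_zero.mp hfac with h' | h'
      · rcases mul_eq_zero.mp h' with h'' | h''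
        · exact absurd h'' (ne_of_gt hpZ)
        · exfalso; linarith
      · linarith
    have hAn : A = 2 := by exact_mod_cast hA2
    have hqv : (q:ℤ) = p + k := by
      rw [hM, hA2] at hMk; linarith
    have hqvn : q = p + k := by exact_mod_cast hqv
    exact ⟨hkp, hqvn, hAn⟩
end
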